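/- arXiv:1403.3306 — 6 statements merged into one kernel-verified Lean document; each statement's English description precedes it below -/
import Mathlib

section
/- Let h > 0, T > 0, k, w ∈ C²([0,h]) with k > 0 on [0,h] and w(0) = w(h) = 0, let F ∈ C([0,T]), and let q be a classical solution of the transport equation with flux F and initial data q₀ ∈ C¹([0,h]). Then for each t* ∈ [0,T] there exists z* ∈ [0,h] such that q(z*,t*) = (1/h) ( ∫₀ʰ q₀(z) dz + k(0) ∫₀^{t*} F(t) dt ). -/
open MeasureTheory Set Filter intervalIntegral

/-- A classical solution of the transport equation `q_t + (w q)_z = (k q_z)_z`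
on `[0,h] × (0,T]` with flux boundary condition `q_z(0,t) = -F(t)`,
no-flux upper boundary condition `q_z(h,t) = 0`, and initial data `q₀`,
together with its partial derivatives `qz`, `qzz`, `qt`. -/
structure ClassicalSolution (h T : ℝ) (k w F q₀ : ℝ → ℝ)
    (q qz qzz qt : ℝ → ℝ → ℝ) : Prop where
  cont : ContinuousOn (fun x : ℝ × ℝ => q x.1 x.2) (Icc 0 h ×ˢ Icc 0 T)
  hasDeriv_z : ∀ z ∈ Icc (0:ℝ) h, ∀ t ∈ Ioc (0:ℝ) T,
    HasDerivWithinAt (fun z' => q z' t) (qz z t) (Icc 0 h) z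
  hasDeriv_zz : ∀ z ∈ Icc (0:ℝ) h, ∀ t ∈ Ioc (0:ℝ) T,
    HasDerivWithinAt (fun z' => qz z' t) (qzz z t) (Icc 0 h) z
  hasDeriv_t : ∀ z ∈ Icc (0:ℝ) h, ∀ t ∈ Ioc (0:ℝ) T,
    HasDerivWithinAt (fun t' => q z t') (qt z t) (Icc 0 T) t
  cont_z : ContinuousOn (fun x : ℝ × ℝ => qz x.1 x.2) (Icc 0 h ×ˢ Ioc 0 T)
  cont_zz : ContinuousOn (fun x : ℝ × ℝ => qzz x.1 x.2) (Icc 0 h ×ˢ Ioc 0 T)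
  cont_t : ContinuousOn (fun x : ℝ × ℝ => qt x.1 x.2) (Icc 0 h ×ˢ Ioc 0 T)
  pde : ∀ z ∈ Icc (0:ℝ) h, ∀ t ∈ Ioc (0:ℝ) T,
    qt z t + (derivWithin w (Icc 0 h) z * q z t + w z * qz z t)
      = derivWithin k (Icc 0 h) z * qz z t + k z * qzz z t
  bc_lower : ∀ t ∈ Ioc (0:ℝ) T, qz 0 t = -F t
  bc_upper : ∀ t ∈ Ioc (0:ℝ) T, qz h t = 0
  ic : ∀ z ∈ Icc (0:ℝ) h, q z 0 = q₀ z

/-- `q` is a classical solution of the transport equation (partial derivatives exist). -/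
def IsClassicalSolution (h T : ℝ) (k w F q₀ : ℝ → ℝ) (q : ℝ → ℝ → ℝ) : Prop :=
  ∃ qz qzz qt, ClassicalSolution h T k w F q₀ q qz qzz qt

/-!
Integrating the equation over `[0, h]`, the flux `k q_z - w q` vanishes at `z = h` and equals
`-k(0) F(t)` at `z = 0`, so the mass `∫₀ʰ q(z, t) dz` grows at rate `k(0) F(t)` and therefore
equals `∫₀ʰ q₀ + k(0) ∫₀ᵗ F`. Divided by `h` this is the average of the continuous function
`q(·, t)` over `[0, h]`, which the mean value theorem for integrals realises at some point.
-/

section ParametricIntegral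

open scoped Interval

variable {E : Type*} [NormedAddCommGroup E] [NormedSpace ℝ E] {a b : ℝ}

theorem continuousOn_intervalIntegral_of_continuousOn_prod {c d : ℝ} {f : ℝ → ℝ → E}
    (hab : a ≤ b) (hcd : c ≤ d) (hf : ContinuousOn (Function.uncurry f) (Icc a b ×ˢ Icc c d)) :
    ContinuousOn (fun t => ∫ z in a..b, f z t) (Icc c d) := by
  -- Precomposing with the projections onto the intervals extends `f` continuously to the plane.
  set g : ℝ → ℝ → E := fun t z => f (projIcc a b hab z) (projIcc c d hcd t)
  have hg : Continuous (Function.uncurry g) :=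
    hf.comp_continuous
      (f := fun p : ℝ × ℝ => ((projIcc a b hab p.2 : ℝ), (projIcc c d hcd p.1 : ℝ)))
      (by fun_prop) fun p => ⟨Subtype.prop _, Subtype.prop _⟩
  refine (continuous_parametric_intervalIntegral_of_continuous' hg a b).continuousOn.congr
    fun t ht => integral_congr fun z hz => ?_
  rw [uIcc_of_le hab] at hz
  simp only [g, projIcc_of_mem _ hz, projIcc_of_mem _ ht]

theorem hasDerivAt_intervalIntegral_of_continuousOn_prod {f f' : ℝ → ℝ → E} {U : Set ℝ}
    {t₀ : ℝ} (hab : a ≤ b) (hU : IsOpen U) (ht₀ : t₀ ∈ U)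
    (hf : ∀ t ∈ U, ContinuousOn (f · t) (Icc a b))
    (hf' : ContinuousOn (Function.uncurry f') (Icc a b ×ˢ U))
    (hderiv : ∀ z ∈ Icc a b, ∀ t ∈ U, HasDerivAt (f z ·) (f' z t) t) :
    HasDerivAt (fun t => ∫ z in a..b, f z t) (∫ z in a..b, f' z t₀) t₀ := by
  obtain ⟨δ, hδ, hsub⟩ := Metric.nhds_basis_closedBall.mem_iff.1 (hU.mem_nhds ht₀)
  obtain ⟨C, hC⟩ := (isCompact_Icc.prod (isCompact_closedBall t₀ δ)).exists_bound_of_continuousOn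
    (hf'.mono (prod_mono subset_rfl hsub))
  have hIoc : Ι a b ⊆ Icc a b := uIoc_of_le hab ▸ Ioc_subset_Icc_self
  have hmeas : ∀ t ∈ U, AEStronglyMeasurable (f · t) (volume.restrict (Ι a b)) := fun t ht =>
    ((hf t ht).mono hIoc).aestronglyMeasurable measurableSet_uIoc
  refine (intervalIntegral.hasDerivAt_integral_of_dominated_loc_of_deriv_le (bound := fun _ => C)
    (Metric.closedBall_mem_nhds t₀ hδ) (eventually_of_mem (hU.mem_nhds ht₀) hmeas)
    ((hf t₀ ht₀).mono (uIcc_of_le hab).subset).intervalIntegrable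
    (((hf'.uncurry_right t₀ ht₀).mono hIoc).aestronglyMeasurable measurableSet_uIoc)
    (ae_of_all _ fun z hz t ht => hC (z, t) ⟨hIoc hz, ht⟩) intervalIntegrable_const
    (ae_of_all _ fun z hz t ht => hderiv z (hIoc hz) t (hsub ht))).2

end ParametricIntegral

namespace ClassicalSolution

variable {h T : ℝ} {k w F q₀ : ℝ → ℝ} {q qz qzz qt : ℝ → ℝ → ℝ}

theorem integral_qt_eq_boundary_flux (S : ClassicalSolution h T k w F q₀ q qz qzz qt) (hh : 0 ≤ h)
    (hk : DifferentiableOn ℝ k (Icc 0 h)) (hw : DifferentiableOn ℝ w (Icc 0 h))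
    (hw0 : w 0 = 0) (hwh : w h = 0) {t : ℝ} (ht : t ∈ Ioc 0 T) :
    ∫ z in (0:ℝ)..h, qt z t = k 0 * F t := by
  -- By the PDE, `q_t` is the `z`-derivative of the flux `k q_z - w q`.
  have hflux : ∀ z ∈ Ioo 0 h, HasDerivAt (fun z => k z * qz z t - w z * q z t) (qt z t) z := by
    intro z hz
    have hz' : z ∈ Icc 0 h := Ioo_subset_Icc_self hz
    have hderiv := ((hk z hz').hasDerivWithinAt.mul (S.hasDeriv_zz z hz' t ht)).sub
      ((hw z hz').hasDerivWithinAt.mul (S.hasDeriv_z z hz' t ht))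
    exact (hderiv.hasDerivAt (Icc_mem_nhds hz.1 hz.2)).congr_deriv
      (by linarith [S.pde z hz' t ht])
  have hcont : ContinuousOn (fun z => k z * qz z t - w z * q z t) (Icc 0 h) :=
    (hk.continuousOn.mul (S.cont_z.uncurry_right (f := qz) t ht)).sub
      (hw.continuousOn.mul (S.cont.uncurry_right (f := q) t (Ioc_subset_Icc_self ht)))
  rw [integral_eq_sub_of_hasDerivAt_of_le hh hcont hflux
    ((S.cont_t.uncurry_right (f := qt) t ht).intervalIntegrable_of_Icc hh)]
  simp [S.bc_upper t ht, S.bc_lower t ht, hw0, hwh]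

theorem integral_eq_initial_add_boundary_flux (S : ClassicalSolution h T k w F q₀ q qz qzz qt)
    (hh : 0 ≤ h) (hk : DifferentiableOn ℝ k (Icc 0 h)) (hw : DifferentiableOn ℝ w (Icc 0 h))
    (hw0 : w 0 = 0) (hwh : w h = 0) (hF : ContinuousOn F (Icc 0 T)) {t : ℝ} (ht : t ∈ Icc 0 T) :
    ∫ z in (0:ℝ)..h, q z t = (∫ z in (0:ℝ)..h, q₀ z) + k 0 * ∫ s in (0:ℝ)..t, F s := by
  have hcont : ContinuousOn (fun s => ∫ z in (0:ℝ)..h, q z s) (Icc 0 t) :=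
    (continuousOn_intervalIntegral_of_continuousOn_prod hh (ht.1.trans ht.2) S.cont).mono
      (Icc_subset_Icc_right ht.2)
  have hderiv : ∀ s ∈ Ioo 0 t,
      HasDerivAt (fun s => ∫ z in (0:ℝ)..h, q z s) (k 0 * F s) s := by
    intro s hs
    have hsT : s ∈ Ioo 0 T := ⟨hs.1, hs.2.trans_le ht.2⟩
    rw [← S.integral_qt_eq_boundary_flux hh hk hw hw0 hwh (Ioo_subset_Ioc_self hsT)]
    exact hasDerivAt_intervalIntegral_of_continuousOn_prod hh isOpen_Ioo hsT
      (fun s hs => S.cont.uncurry_right (f := q) s (Ioo_subset_Icc_self hs))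
      (S.cont_t.mono (prod_mono subset_rfl Ioo_subset_Ioc_self))
      (fun z hz s hs => (S.hasDeriv_t z hz s (Ioo_subset_Ioc_self hs)).hasDerivAt
        (Icc_mem_nhds hs.1 hs.2))
  have hinit : ∫ z in (0:ℝ)..h, q z 0 = ∫ z in (0:ℝ)..h, q₀ z :=
    integral_congr fun z hz => S.ic z (uIcc_of_le hh ▸ hz)
  have hbalance := integral_eq_sub_of_hasDerivAt_of_le ht.1 hcont hderiv
    ((continuousOn_const.mul (hF.mono (Icc_subset_Icc_right ht.2))).intervalIntegrable_of_Icc ht.1)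
  rw [intervalIntegral.integral_const_mul, hinit] at hbalance
  linarith

end ClassicalSolution

theorem exists_point_eq_mean_value_general
    (h T : ℝ) (hh : 0 < h) (k w F q₀ : ℝ → ℝ)
    (hk : ContDiffOn ℝ 2 k (Icc 0 h)) (hw : ContDiffOn ℝ 2 w (Icc 0 h))
    (hw0 : w 0 = 0) (hwh : w h = 0)
    (hF : ContinuousOn F (Icc 0 T))
    (q : ℝ → ℝ → ℝ) (hq : IsClassicalSolution h T k w F q₀ q) :
    ∀ tstar ∈ Icc (0:ℝ) T, ∃ zstar ∈ Icc (0:ℝ) h,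
      q zstar tstar =
        (1 / h) * ((∫ z in (0:ℝ)..h, q₀ z) + k 0 * ∫ t in (0:ℝ)..tstar, F t) := by
  intro tstar htstar
  obtain ⟨qz, qzz, qt, S⟩ := hq
  obtain ⟨zstar, hzstar, hmean⟩ := exists_eq_interval_average hh.ne
    ((S.cont.uncurry_right (f := q) tstar htstar).mono (uIcc_of_le hh.le).subset)
  refine ⟨zstar, Ioo_subset_Icc_self (uIoo_of_le hh.le ▸ hzstar), ?_⟩
  rw [hmean, interval_average_eq_div, S.integral_eq_initial_add_boundary_flux hh.le
    (hk.differentiableOn two_ne_zero) (hw.differentiableOn two_ne_zero) hw0 hwh hF htstar]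
  ring

/-- For each time `t* ∈ [0,T]` there is a point `z* ∈ [0,h]` at which the solution
equals the average value `(1/h)(∫₀ʰ q₀ + k(0) ∫₀^{t*} F)`. -/
theorem exists_point_eq_mean_value
    (h T : ℝ) (hh : 0 < h) (hT : 0 < T) (k w F q₀ : ℝ → ℝ)
    (hk : ContDiffOn ℝ 2 k (Icc 0 h)) (hw : ContDiffOn ℝ 2 w (Icc 0 h))
    (hkpos : ∀ z ∈ Icc (0:ℝ) h, 0 < k z)
    (hw0 : w 0 = 0) (hwh : w h = 0)
    (hF : ContinuousOn F (Icc 0 T)) (hq₀ : ContDiffOn ℝ 1 q₀ (Icc 0 h))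
    (q : ℝ → ℝ → ℝ) (hq : IsClassicalSolution h T k w F q₀ q) :
    ∀ tstar ∈ Icc (0:ℝ) T, ∃ zstar ∈ Icc (0:ℝ) h,
      q zstar tstar =
        (1 / h) * ((∫ z in (0:ℝ)..h, q₀ z) + k 0 * ∫ t in (0:ℝ)..tstar, F t) :=
  exists_point_eq_mean_value_general h T hh k w F q₀ hk hw hw0 hwh hF q hq
end

section
/- Let h > 0 and k(0) > 0 be given. There exists a constant A > 0, depending only on h and k(0), with the following property: for every T > 0, every k, w ∈ C²([0,h]) with k > 0 on [0,h], k having the given value at 0, and w(0) = w(h) = 0, every F ∈ C([0,T]), every q₀ ∈ C¹([0,h]), and every classical solution q of the transport equation with flux F and initial data q₀, one has for all (z,t) ∈ [0,h]×(0,T]: |q(z,t)|² ≤ A ( ∫₀ʰ q₀(ζ)² dζ + ∫₀ʰ q_z(ζ,t)² dζ + t ∫₀ᵗ F(s)² ds ). -/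
/-!
Integrating the equation over `[0, h]`, the no-flux condition at `z = h` and `w(0) = w(h) = 0`
show that the mass `∫₀ʰ q(·, t)` changes at rate `k(0) F(t)`, so it equals
`∫₀ʰ q₀ + k(0) ∫₀ᵗ F`. On the other hand `q(z, t)` differs from its mean over `[0, h]` by at
most `∫₀ʰ |q_z(·, t)|`. Cauchy–Schwarz turns the three integrals `∫ q₀`, `∫ F` and `∫ |q_z|`
into the `L²` quantities of the bound.
-/

open MeasureTheory Set Filter intervalIntegral

section Interval

variable {E : Type*} [NormedAddCommGroup E] [NormedSpace ℝ E] {a b c d : ℝ}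

theorem integral_eq_sub_of_hasDerivWithinAt_Icc [CompleteSpace E] {f f' : ℝ → E} (hab : a ≤ b)
    (hf : ∀ x ∈ Icc a b, HasDerivWithinAt f (f' x) (Icc a b) x)
    (hf' : IntervalIntegrable f' volume a b) : ∫ x in a..b, f' x = f b - f a :=
  integral_eq_sub_of_hasDerivAt_of_le hab (fun x hx => (hf x hx).continuousWithinAt)
    (fun x hx => (hf x (Ioo_subset_Icc_self hx)).hasDerivAt (Icc_mem_nhds hx.1 hx.2)) hf'

theorem continuousOn_intervalIntegral_of_continuousOn_Icc [CompleteSpace E] {f : ℝ → ℝ → E}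
    (hab : a ≤ b) (hcd : c ≤ d)
    (hf : ContinuousOn (fun x : ℝ × ℝ => f x.1 x.2) (Icc a b ×ˢ Icc c d)) :
    ContinuousOn (fun s => ∫ y in a..b, f y s) (Icc c d) := by
  -- extend `f` continuously to the whole plane by clamping both variables
  set g : ℝ → ℝ → E := fun s y => f (projIcc a b hab y) (projIcc c d hcd s)
  have hg : Continuous (Function.uncurry g) :=
    hf.comp_continuous
      (f := fun x : ℝ × ℝ => ((projIcc a b hab x.2 : ℝ), (projIcc c d hcd x.1 : ℝ)))
      (by fun_prop) fun x => ⟨Subtype.prop _, Subtype.prop _⟩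
  refine (continuous_parametric_intervalIntegral_of_continuous' hg a b).continuousOn.congr
    fun s hs => integral_congr fun y hy => ?_
  rw [uIcc_of_le hab] at hy
  simp [g, projIcc_of_mem _ hy, projIcc_of_mem _ hs]

theorem hasDerivAt_intervalIntegral_of_continuousOn {f f' : ℝ → ℝ → E} {s₀ : ℝ}
    (hab : a ≤ b) (hs₀ : s₀ ∈ Ioo c d)
    (hf : ContinuousOn (fun x : ℝ × ℝ => f x.1 x.2) (Icc a b ×ˢ Icc c d))
    (hf' : ContinuousOn (fun x : ℝ × ℝ => f' x.1 x.2) (Icc a b ×ˢ Icc c d))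
    (hderiv : ∀ y ∈ Icc a b, ∀ s ∈ Ioo c d, HasDerivAt (f y) (f' y s) s) :
    HasDerivAt (fun s => ∫ y in a..b, f y s) (∫ y in a..b, f' y s₀) s₀ := by
  obtain ⟨M, hM⟩ := (isCompact_Icc.prod isCompact_Icc).exists_bound_of_continuousOn hf'
  have hIoc : uIoc a b ⊆ Icc a b := by rw [uIoc_of_le hab]; exact Ioc_subset_Icc_self
  have hs₀' : s₀ ∈ Icc c d := Ioo_subset_Icc_self hs₀
  refine (hasDerivAt_integral_of_dominated_loc_of_deriv_le (bound := fun _ => M)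
    (F := fun s y => f y s) (F' := fun s y => f' y s) (Ioo_mem_nhds hs₀.1 hs₀.2)
    ?_ ?_ ?_ ?_ intervalIntegrable_const ?_).2
  · filter_upwards [Ioo_mem_nhds hs₀.1 hs₀.2] with s hs
    exact ((hf.uncurry_right s (Ioo_subset_Icc_self hs)).mono hIoc).aestronglyMeasurable
      measurableSet_uIoc
  · exact (hf.uncurry_right s₀ hs₀').intervalIntegrable_of_Icc hab
  · exact ((hf'.uncurry_right s₀ hs₀').mono hIoc).aestronglyMeasurable measurableSet_uIoc
  · exact ae_of_all _ fun y hy s hs => hM (y, s) ⟨hIoc hy, Ioo_subset_Icc_self hs⟩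
  · exact ae_of_all _ fun y hy s hs => hderiv y (hIoc hy) s hs

end Interval

section SobolevInterval

variable {a b : ℝ}

theorem sq_intervalIntegral_le {f : ℝ → ℝ} (hab : a ≤ b) (hf : ContinuousOn f (Icc a b)) :
    (∫ x in a..b, f x) ^ 2 ≤ (b - a) * ∫ x in a..b, f x ^ 2 := by
  have hfi : IntervalIntegrable f volume a b := hf.intervalIntegrable_of_Icc hab
  have hf2i : IntervalIntegrable (fun x => f x ^ 2) volume a b :=
    (hf.pow 2).intervalIntegrable_of_Icc hab
  -- the quadratic `c ↦ ∫ (f - c)²` is nonnegative, so its discriminant is not positive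
  have hquad : ∀ c : ℝ,
      0 ≤ (b - a) * (c * c) + (-2 * ∫ x in a..b, f x) * c + ∫ x in a..b, f x ^ 2 := by
    intro c
    have hexp : ∫ x in a..b, (f x - c) ^ 2
        = (b - a) * (c * c) + (-2 * ∫ x in a..b, f x) * c + ∫ x in a..b, f x ^ 2 := by
      simp_rw [sub_sq]
      rw [integral_add (hf2i.sub ((hfi.const_mul 2).mul_const c)) intervalIntegrable_const,
        integral_sub hf2i ((hfi.const_mul 2).mul_const c), intervalIntegral.integral_mul_const,
        intervalIntegral.integral_const_mul, intervalIntegral.integral_const]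
      simp only [smul_eq_mul]
      ring
    exact hexp ▸ integral_nonneg hab fun x _ => sq_nonneg _
  have := discrim_le_zero hquad
  rw [discrim] at this
  linarith

theorem abs_sub_le_integral_abs_of_hasDerivWithinAt {f f' : ℝ → ℝ} (hab : a ≤ b)
    (hf : ∀ x ∈ Icc a b, HasDerivWithinAt f (f' x) (Icc a b) x)
    (hf' : ContinuousOn f' (Icc a b)) {y z : ℝ} (hy : y ∈ Icc a b) (hz : z ∈ Icc a b) :
    |f z - f y| ≤ ∫ x in a..b, |f' x| := by
  wlog hyz : y ≤ z generalizing y z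
  · rw [abs_sub_comm]; exact this hz hy (le_of_not_ge hyz)
  have hsub : Icc y z ⊆ Icc a b := Icc_subset_Icc hy.1 hz.2
  have hftc : ∫ x in y..z, f' x = f z - f y :=
    integral_eq_sub_of_hasDerivWithinAt_Icc hyz (fun x hx => (hf x (hsub hx)).mono hsub)
      ((hf'.mono hsub).intervalIntegrable_of_Icc hyz)
  calc |f z - f y| = |∫ x in y..z, f' x| := by rw [hftc]
    _ ≤ ∫ x in y..z, |f' x| := abs_integral_le_integral_abs hyz
    _ ≤ ∫ x in a..b, |f' x| :=
      integral_mono_interval hy.1 hyz hz.2 (ae_of_all _ fun _ => abs_nonneg _)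
        (hf'.abs.intervalIntegrable_of_Icc hab)

theorem abs_mul_sub_integral_le_of_hasDerivWithinAt {f f' : ℝ → ℝ} (hab : a ≤ b)
    (hf : ∀ x ∈ Icc a b, HasDerivWithinAt f (f' x) (Icc a b) x)
    (hf' : ContinuousOn f' (Icc a b)) {z : ℝ} (hz : z ∈ Icc a b) :
    |(b - a) * f z - ∫ y in a..b, f y| ≤ (b - a) * ∫ x in a..b, |f' x| := by
  have hfi : IntervalIntegrable f volume a b :=
    (HasDerivWithinAt.continuousOn hf).intervalIntegrable_of_Icc hab
  have hmean : ∫ y in a..b, (f z - f y) = (b - a) * f z - ∫ y in a..b, f y := by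
    rw [integral_sub intervalIntegrable_const hfi, intervalIntegral.integral_const, smul_eq_mul]
  have hbound := norm_integral_le_of_norm_le_const (a := a) (b := b)
    (f := fun y => f z - f y) (C := ∫ x in a..b, |f' x|) fun y hy => by
      rw [uIoc_of_le hab] at hy
      exact abs_sub_le_integral_abs_of_hasDerivWithinAt hab hf hf' (Ioc_subset_Icc_self hy) hz
  rw [Real.norm_eq_abs, hmean, abs_of_nonneg (sub_nonneg.2 hab)] at hbound
  linarith

theorem sq_le_sq_integral_add_integral_deriv_sq {f f' : ℝ → ℝ} (hab : a ≤ b)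
    (hf : ∀ x ∈ Icc a b, HasDerivWithinAt f (f' x) (Icc a b) x)
    (hf' : ContinuousOn f' (Icc a b)) {z : ℝ} (hz : z ∈ Icc a b) :
    (b - a) ^ 2 * f z ^ 2
      ≤ 2 * (∫ y in a..b, f y) ^ 2 + 2 * (b - a) ^ 3 * ∫ x in a..b, f' x ^ 2 := by
  have hdev := abs_mul_sub_integral_le_of_hasDerivWithinAt hab hf hf' hz
  have hcs : (∫ x in a..b, |f' x|) ^ 2 ≤ (b - a) * ∫ x in a..b, f' x ^ 2 := by
    simpa only [sq_abs] using sq_intervalIntegral_le hab hf'.abs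
  have hdev2 : ((b - a) * f z - ∫ y in a..b, f y) ^ 2 ≤ (b - a) ^ 3 * ∫ x in a..b, f' x ^ 2 :=
    calc ((b - a) * f z - ∫ y in a..b, f y) ^ 2 ≤ ((b - a) * ∫ x in a..b, |f' x|) ^ 2 :=
          sq_le_sq' (abs_le.1 hdev).1 (abs_le.1 hdev).2
      _ ≤ (b - a) ^ 3 * ∫ x in a..b, f' x ^ 2 := by
          rw [mul_pow, pow_succ _ 2, mul_assoc]
          gcongr
  nlinarith [sq_nonneg ((b - a) * f z - 2 * ∫ y in a..b, f y)]

end SobolevInterval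

namespace ClassicalSolution

variable {h T : ℝ} {k w F q₀ : ℝ → ℝ} {q qz qzz qt : ℝ → ℝ → ℝ}

-- `q_t = (k q_z - w q)_z`, and the flux `k q_z - w q` is `0` at `z = h` and `k 0 * F` at `z = 0`.
theorem integral_qt_eq (sol : ClassicalSolution h T k w F q₀ q qz qzz qt) (hh : 0 ≤ h)
    (hk : DifferentiableOn ℝ k (Icc 0 h)) (hw : DifferentiableOn ℝ w (Icc 0 h))
    (hw0 : w 0 = 0) (hwh : w h = 0) {s : ℝ} (hs : s ∈ Ioc 0 T) :
    ∫ y in (0:ℝ)..h, qt y s = k 0 * F s := by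
  have hflux : ∀ y ∈ Icc (0:ℝ) h,
      HasDerivWithinAt (fun y => k y * qz y s - w y * q y s) (qt y s) (Icc 0 h) y := by
    intro y hy
    refine (((hk y hy).hasDerivWithinAt.mul (sol.hasDeriv_zz y hy s hs)).sub
      ((hw y hy).hasDerivWithinAt.mul (sol.hasDeriv_z y hy s hs))).congr_deriv ?_
    linarith [sol.pde y hy s hs]
  rw [integral_eq_sub_of_hasDerivWithinAt_Icc hh hflux
    ((sol.cont_t.uncurry_right s hs).intervalIntegrable_of_Icc hh)]
  simp only [sol.bc_upper s hs, sol.bc_lower s hs, hwh, hw0]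
  ring

theorem hasDerivAt_integral (sol : ClassicalSolution h T k w F q₀ q qz qzz qt) (hh : 0 ≤ h)
    {s : ℝ} (hs : s ∈ Ioo 0 T) :
    HasDerivAt (fun s => ∫ y in (0:ℝ)..h, q y s) (∫ y in (0:ℝ)..h, qt y s) s := by
  have hsub : Icc (s / 2) T ⊆ Ioc 0 T := fun x hx => ⟨by linarith [hs.1, hx.1], hx.2⟩
  refine hasDerivAt_intervalIntegral_of_continuousOn hh ⟨by linarith [hs.1], hs.2⟩
    (sol.cont.mono (prod_mono subset_rfl (hsub.trans Ioc_subset_Icc_self)))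
    (sol.cont_t.mono (prod_mono subset_rfl hsub)) fun y hy x hx => ?_
  exact (sol.hasDeriv_t y hy x (hsub (Ioo_subset_Icc_self hx))).hasDerivAt
    (Icc_mem_nhds (by linarith [hs.1, hx.1]) hx.2)

theorem integral_eq_integral_add_integral_flux (sol : ClassicalSolution h T k w F q₀ q qz qzz qt)
    (hh : 0 ≤ h) (hk : DifferentiableOn ℝ k (Icc 0 h)) (hw : DifferentiableOn ℝ w (Icc 0 h))
    (hw0 : w 0 = 0) (hwh : w h = 0) (hF : ContinuousOn F (Icc 0 T)) {t : ℝ} (ht : t ∈ Icc 0 T) :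
    ∫ y in (0:ℝ)..h, q y t = (∫ y in (0:ℝ)..h, q₀ y) + k 0 * ∫ s in (0:ℝ)..t, F s := by
  have hsub : Icc 0 t ⊆ Icc 0 T := Icc_subset_Icc_right ht.2
  have hftc := integral_eq_sub_of_hasDerivAt_of_le ht.1
    (continuousOn_intervalIntegral_of_continuousOn_Icc hh ht.1
      (sol.cont.mono (prod_mono subset_rfl hsub)))
    (fun s hs => by
      have hsT : s ∈ Ioo 0 T := ⟨hs.1, hs.2.trans_le ht.2⟩
      simpa only [sol.integral_qt_eq hh hk hw hw0 hwh (Ioo_subset_Ioc_self hsT)]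
        using sol.hasDerivAt_integral hh hsT)
    (((hF.mono hsub).intervalIntegrable_of_Icc ht.1).const_mul (k 0))
  have hinit : ∫ y in (0:ℝ)..h, q y 0 = ∫ y in (0:ℝ)..h, q₀ y :=
    integral_congr fun y hy => sol.ic y (by rwa [uIcc_of_le hh] at hy)
  rw [intervalIntegral.integral_const_mul, hinit] at hftc
  linarith

end ClassicalSolution

theorem pointwise_bound_general
    (h k0 : ℝ) (hh : 0 < h) :
    ∃ A > (0:ℝ), ∀ (T : ℝ) (k w F q₀ : ℝ → ℝ) (q qz qzz qt : ℝ → ℝ → ℝ),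
      0 < T →
      ContDiffOn ℝ 2 k (Icc 0 h) → ContDiffOn ℝ 2 w (Icc 0 h) →
      (∀ z ∈ Icc (0:ℝ) h, 0 < k z) → k 0 = k0 →
      w 0 = 0 → w h = 0 →
      ContinuousOn F (Icc 0 T) → ContDiffOn ℝ 1 q₀ (Icc 0 h) →
      ClassicalSolution h T k w F q₀ q qz qzz qt →
      ∀ z ∈ Icc (0:ℝ) h, ∀ t ∈ Ioc (0:ℝ) T,
        (q z t) ^ 2 ≤ A * ((∫ ζ in (0:ℝ)..h, (q₀ ζ) ^ 2)
          + (∫ ζ in (0:ℝ)..h, (qz ζ t) ^ 2)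
          + t * ∫ s in (0:ℝ)..t, (F s) ^ 2) := by
  refine ⟨4 / h + 2 * h + 4 * k0 ^ 2 / h ^ 2, by positivity, ?_⟩
  intro T k w F q₀ q qz qzz qt _ hk hw _ hk0 hw0 hwh hF hq₀ sol z hz t ht
  have hmass := sol.integral_eq_integral_add_integral_flux hh.le
    (hk.differentiableOn (by norm_num)) (hw.differentiableOn (by norm_num)) hw0 hwh hF
    (Ioc_subset_Icc_self ht)
  have hsob := sq_le_sq_integral_add_integral_deriv_sq hh.le
    (fun y hy => sol.hasDeriv_z y hy t ht) (sol.cont_z.uncurry_right t ht) hz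
  have hq₀ := sq_intervalIntegral_le hh.le hq₀.continuousOn
  have hF := sq_intervalIntegral_le ht.1.le (hF.mono (Icc_subset_Icc_right ht.2))
  rw [hmass, hk0, sub_zero] at hsob
  rw [sub_zero] at hq₀ hF
  set E₀ := ∫ ζ in (0:ℝ)..h, q₀ ζ ^ 2
  set E₁ := ∫ ζ in (0:ℝ)..h, qz ζ t ^ 2
  set E₂ := t * ∫ s in (0:ℝ)..t, F s ^ 2
  have hE₀ : 0 ≤ E₀ := integral_nonneg hh.le fun _ _ => sq_nonneg _
  have hE₁ : 0 ≤ E₁ := integral_nonneg hh.le fun _ _ => sq_nonneg _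
  have hE₂ : 0 ≤ E₂ := mul_nonneg ht.1.le (integral_nonneg ht.1.le fun _ _ => sq_nonneg _)
  have hcombined : h ^ 2 * q z t ^ 2 ≤ 4 * h * E₀ + 2 * h ^ 3 * E₁ + 4 * k0 ^ 2 * E₂ := by
    nlinarith [sq_nonneg ((∫ y in (0:ℝ)..h, q₀ y) - k0 * ∫ s in (0:ℝ)..t, F s),
      mul_le_mul_of_nonneg_left hF (sq_nonneg k0)]
  have hA : h ^ 2 * ((4 / h + 2 * h + 4 * k0 ^ 2 / h ^ 2) * (E₀ + E₁ + E₂))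
      = (4 * h + 2 * h ^ 3 + 4 * k0 ^ 2) * (E₀ + E₁ + E₂) := by
    field_simp
  refine le_of_mul_le_mul_left (hA ▸ hcombined.trans ?_) (by positivity : (0:ℝ) < h ^ 2)
  nlinarith [mul_nonneg hh.le (add_nonneg hE₁ hE₂),
    mul_nonneg (pow_nonneg hh.le 3) (add_nonneg hE₀ hE₂),
    mul_nonneg (sq_nonneg k0) (add_nonneg hE₀ hE₁)]

/-- Pointwise bound on the solution in terms of the initial data, the spatial
`L²` norm of `q_z`, and the flux, with a constant depending only on `h` and `k(0)`. -/
theorem pointwise_bound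
    (h k0 : ℝ) (hh : 0 < h) (hk0 : 0 < k0) :
    ∃ A > (0:ℝ), ∀ (T : ℝ) (k w F q₀ : ℝ → ℝ) (q qz qzz qt : ℝ → ℝ → ℝ),
      0 < T →
      ContDiffOn ℝ 2 k (Icc 0 h) → ContDiffOn ℝ 2 w (Icc 0 h) →
      (∀ z ∈ Icc (0:ℝ) h, 0 < k z) → k 0 = k0 →
      w 0 = 0 → w h = 0 →
      ContinuousOn F (Icc 0 T) → ContDiffOn ℝ 1 q₀ (Icc 0 h) →
      ClassicalSolution h T k w F q₀ q qz qzz qt →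
      ∀ z ∈ Icc (0:ℝ) h, ∀ t ∈ Ioc (0:ℝ) T,
        (q z t) ^ 2 ≤ A * ((∫ ζ in (0:ℝ)..h, (q₀ ζ) ^ 2)
          + (∫ ζ in (0:ℝ)..h, (qz ζ t) ^ 2)
          + t * ∫ s in (0:ℝ)..t, (F s) ^ 2) :=
  pointwise_bound_general h k0 hh
end

section
/- Let h > 0 and k, w ∈ C²([0,h]) with k > 0 on [0,h], and set μ(z) = exp( ∫₀ᶻ w(ζ)/k(ζ) dζ ). There exists a constant C > 0, depending only on k, w and h, such that for every λ ≥ 0 and every p ∈ C²([0,h]) satisfying (k p')' + w p' + λ p = 0 on [0,h], p'(0) = p'(h) = 0, and the normalization p(0) = 1, one has C⁻¹ ≤ ∫₀ʰ p(z)² μ(z) dz ≤ C. -/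
open Set intervalIntegral

/-!
Write the equation as the first-order system `p' = g / k`, `g' = -(w g / k + λ p)` for the flux
`g = k p'`. The energy `E = (λ + 1) p² + g² / k` satisfies `E' = 2 p g / k - (k' + 2 w) g² / k²`,
so `|E'| ≤ K E` with `K` independent of `λ ≥ 0`; since `E 0 = λ + 1`, Gronwall's inequality traps
`E` between `(λ + 1) e^{∓K h}`, and the upper bound bounds `p²`. For the lower bound,
`(μ g p)' = μ g² / k - λ μ p²` and `g` vanishes at both ends, so `∫ μ g² / k = λ ∫ μ p²`, hence
`∫ μ E = (2λ + 1) ∫ μ p²`, which is at least `(λ + 1) e^{-K h} ∫ μ`.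
-/

open Real

theorem antitoneOn_exp_neg_mul_mul_of_deriv_le {E E' : ℝ → ℝ} {a b c : ℝ}
    (hE : ∀ x ∈ Icc a b, HasDerivWithinAt E (E' x) (Icc a b) x)
    (hE' : ∀ x ∈ Ioo a b, E' x ≤ c * E x) :
    AntitoneOn (fun x => exp (-(c * x)) * E x) (Icc a b) := by
  have hderiv : ∀ x ∈ Icc a b, HasDerivWithinAt (fun x => exp (-(c * x)) * E x)
      (exp (-(c * x)) * (E' x - c * E x)) (Icc a b) x := by
    intro x hx
    have hexp : HasDerivWithinAt (fun y => exp (-(c * y))) (exp (-(c * x)) * -c) (Icc a b) x :=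
      (((hasDerivWithinAt_id x _).const_mul c).neg.congr_deriv (by simp)).exp
    exact (hexp.mul (hE x hx)).congr_deriv (by ring)
  refine antitoneOn_of_hasDerivWithinAt_nonpos (convex_Icc a b)
    (f' := fun x => exp (-(c * x)) * (E' x - c * E x))
    (fun x hx => (hderiv x hx).continuousWithinAt) (fun x hx => ?_) (fun x hx => ?_) <;>
    rw [interior_Icc] at *
  · exact (hderiv x (Ioo_subset_Icc_self hx)).mono Ioo_subset_Icc_self
  · exact mul_nonpos_of_nonneg_of_nonpos (exp_pos _).le (sub_nonpos.2 (hE' x hx))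

theorem mul_exp_bounds_of_abs_deriv_le {E E' : ℝ → ℝ} {a b K x : ℝ}
    (hE : ∀ x ∈ Icc a b, HasDerivWithinAt E (E' x) (Icc a b) x)
    (hE' : ∀ x ∈ Ioo a b, |E' x| ≤ K * E x) (hx : x ∈ Icc a b) :
    E a * exp (-(K * (x - a))) ≤ E x ∧ E x ≤ E a * exp (K * (x - a)) := by
  have ha : a ∈ Icc a b := ⟨le_rfl, hx.1.trans hx.2⟩
  have hup := antitoneOn_exp_neg_mul_mul_of_deriv_le hE
    (fun y hy => (le_abs_self _).trans (hE' y hy)) ha hx hx.1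
  have hlow := antitoneOn_exp_neg_mul_mul_of_deriv_le (E := -E) (E' := -E') (c := -K)
    (fun y hy => (hE y hy).neg)
    (fun y hy => by simpa using (neg_le_abs _).trans (hE' y hy)) ha hx hx.1
  simp only [Pi.neg_apply, neg_mul, neg_neg, mul_neg, neg_le_neg_iff] at hup hlow
  constructor
  · calc E a * exp (-(K * (x - a))) = exp (K * a) * E a * exp (-(K * x)) := by
          rw [mul_right_comm, ← exp_add]; ring_nf
      _ ≤ exp (K * x) * E x * exp (-(K * x)) := by gcongr
      _ = E x := by rw [mul_right_comm, ← exp_add]; simp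
  · calc E x = exp (K * x) * (exp (-(K * x)) * E x) := by rw [← mul_assoc, ← exp_add]; simp
      _ ≤ exp (K * x) * (exp (-(K * a)) * E a) := by gcongr
      _ = E a * exp (K * (x - a)) := by rw [← mul_assoc, ← exp_add]; ring_nf

theorem hasDerivWithinAt_integral_of_continuousOn {f : ℝ → ℝ} {a b x : ℝ}
    (hf : ContinuousOn f (Icc a b)) (hx : x ∈ Icc a b) :
    HasDerivWithinAt (fun u => ∫ t in a..u, f t) (f x) (Icc a b) x := by
  have : Fact (x ∈ Icc a b) := ⟨hx⟩
  refine integral_hasDerivWithinAt_right ?_ (hf.stronglyMeasurableAtFilter_nhdsWithin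
    measurableSet_Icc x) (hf x hx)
  exact (hf.mono (Icc_subset_Icc le_rfl hx.2)).intervalIntegrable_of_Icc hx.1

namespace SturmLiouville

variable {a b lam : ℝ} {k w μ p g : ℝ → ℝ}

theorem integral_weight_mul_sq_div_eq_mul_integral (hab : a ≤ b)
    (hk : ContinuousOn k (Icc a b)) (hk0 : ∀ x ∈ Icc a b, k x ≠ 0)
    (hμ : ∀ x ∈ Icc a b, HasDerivWithinAt μ (μ x * (w x / k x)) (Icc a b) x)
    (hp : ∀ x ∈ Icc a b, HasDerivWithinAt p (g x / k x) (Icc a b) x)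
    (hg : ∀ x ∈ Icc a b, HasDerivWithinAt g (-(w x * (g x / k x) + lam * p x)) (Icc a b) x)
    (hga : g a = 0) (hgb : g b = 0) :
    ∫ x in a..b, μ x * g x ^ 2 / k x = lam * ∫ x in a..b, p x ^ 2 * μ x := by
  have hμc : ContinuousOn μ (Icc a b) := HasDerivWithinAt.continuousOn hμ
  have hpc : ContinuousOn p (Icc a b) := HasDerivWithinAt.continuousOn hp
  have hgc : ContinuousOn g (Icc a b) := HasDerivWithinAt.continuousOn hg
  have hG : ∀ x ∈ Icc a b, HasDerivWithinAt (fun x => g x * μ x * p x)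
      (μ x * g x ^ 2 / k x - lam * (p x ^ 2 * μ x)) (Icc a b) x := by
    intro x hx
    refine (((hg x hx).mul (hμ x hx)).mul (hp x hx)).congr_deriv ?_
    simp only [Pi.mul_apply]
    field_simp [hk0 x hx]
    ring
  have hint₁ : IntervalIntegrable (fun x => μ x * g x ^ 2 / k x) MeasureTheory.volume a b :=
    ((hμc.mul (hgc.pow 2)).div hk hk0).intervalIntegrable_of_Icc hab
  have hint₂ : IntervalIntegrable (fun x => p x ^ 2 * μ x) MeasureTheory.volume a b :=
    ((hpc.pow 2).mul hμc).intervalIntegrable_of_Icc hab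
  have hftc := integral_eq_sub_of_hasDeriv_right_of_le hab
    (fun x hx => (hG x hx).continuousWithinAt)
    (fun x hx => ((hG x (Ioo_subset_Icc_self hx)).hasDerivAt
      (Icc_mem_nhds hx.1 hx.2)).hasDerivWithinAt) (hint₁.sub (hint₂.const_mul lam))
  rw [integral_sub hint₁ (hint₂.const_mul lam), integral_const_mul] at hftc
  simp only [hga, hgb, zero_mul, sub_zero] at hftc
  linarith

theorem hasDerivWithinAt_flux_system_of_contDiffOn {x : ℝ} (hab : a < b)
    (hk : ContDiffOn ℝ 1 k (Icc a b)) (hk0 : ∀ x ∈ Icc a b, k x ≠ 0)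
    (hp : ContDiffOn ℝ 2 p (Icc a b))
    (hODE : ∀ z ∈ Icc a b, derivWithin (fun y => k y * derivWithin p (Icc a b) y) (Icc a b) z
      + w z * derivWithin p (Icc a b) z + lam * p z = 0) (hx : x ∈ Icc a b) :
    HasDerivWithinAt p (k x * derivWithin p (Icc a b) x / k x) (Icc a b) x ∧
      HasDerivWithinAt (fun y => k y * derivWithin p (Icc a b) y)
        (-(w x * (k x * derivWithin p (Icc a b) x / k x) + lam * p x)) (Icc a b) x := by
  have hq : ContDiffOn ℝ 1 (derivWithin p (Icc a b)) (Icc a b) :=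
    hp.derivWithin (uniqueDiffOn_Icc hab) (by norm_num)
  rw [mul_div_cancel_left₀ _ (hk0 x hx)]
  refine ⟨(hp.differentiableOn (by norm_num) x hx).hasDerivWithinAt,
    (((hk.mul hq).differentiableOn one_ne_zero) x hx).hasDerivWithinAt.congr_deriv ?_⟩
  linarith [hODE x hx]

theorem hasDerivWithinAt_energy {k' : ℝ → ℝ} {s : Set ℝ} {x : ℝ}
    (hk : HasDerivWithinAt k (k' x) s x) (hk0 : k x ≠ 0)
    (hp : HasDerivWithinAt p (g x / k x) s x)
    (hg : HasDerivWithinAt g (-(w x * (g x / k x) + lam * p x)) s x) :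
    HasDerivWithinAt (fun y => (lam + 1) * p y ^ 2 + g y ^ 2 / k y)
      (2 * p x * g x / k x - (k' x + 2 * w x) * g x ^ 2 / k x ^ 2) s x := by
  refine (((hp.pow 2).const_mul (lam + 1)).add ((hg.pow 2).div hk hk0)).congr_deriv ?_
  simp only [Pi.pow_apply]
  field_simp
  ring

theorem abs_energy_deriv_le {lam κ B P G k c : ℝ} (hlam : 0 ≤ lam) (hκ : 0 < κ) (hκk : κ ≤ k)
    (hc : |c| ≤ B) :
    |2 * P * G / k - c * G ^ 2 / k ^ 2| ≤ (1 + (1 + B) / κ) * ((lam + 1) * P ^ 2 + G ^ 2 / k) := by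
  have hk : 0 < k := hκ.trans_le hκk
  have hB : 0 ≤ B := (abs_nonneg c).trans hc
  have hQ : 0 ≤ G ^ 2 / k := by positivity
  have hGk : (G / k) ^ 2 ≤ G ^ 2 / k / κ := by
    rw [div_pow, sq k, ← div_div]; exact div_le_div_of_nonneg_left hQ hκ hκk
  have hcross : |2 * P * G / k| ≤ P ^ 2 + (G / k) ^ 2 := by
    rw [mul_div_assoc, abs_le]
    constructor <;> nlinarith [sq_nonneg (P + G / k), sq_nonneg (P - G / k)]
  have hdrift : |c * G ^ 2 / k ^ 2| ≤ B * (G ^ 2 / k / κ) := by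
    rw [mul_div_assoc, ← div_pow, abs_mul, abs_of_nonneg (sq_nonneg (G / k))]
    exact mul_le_mul hc hGk (sq_nonneg _) hB
  have hr : 0 ≤ (1 + B) / κ := by positivity
  calc |2 * P * G / k - c * G ^ 2 / k ^ 2|
      ≤ |2 * P * G / k| + |c * G ^ 2 / k ^ 2| := abs_sub _ _
    _ ≤ P ^ 2 + (1 + B) / κ * (G ^ 2 / k) := by
        have : (1 + B) / κ * (G ^ 2 / k) = G ^ 2 / k / κ + B * (G ^ 2 / k / κ) := by ring
        linarith
    _ ≤ (1 + (1 + B) / κ) * ((lam + 1) * P ^ 2 + G ^ 2 / k) := by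
        nlinarith [mul_nonneg (add_nonneg hr hlam) (sq_nonneg P),
          mul_nonneg (mul_nonneg hr hlam) (sq_nonneg P)]

theorem energy_bounds {k' : ℝ → ℝ} {κ B x : ℝ} (hlam : 0 ≤ lam) (hκ : 0 < κ)
    (hk : ∀ x ∈ Icc a b, HasDerivWithinAt k (k' x) (Icc a b) x)
    (hκk : ∀ x ∈ Icc a b, κ ≤ k x) (hB : ∀ x ∈ Icc a b, |k' x + 2 * w x| ≤ B)
    (hp : ∀ x ∈ Icc a b, HasDerivWithinAt p (g x / k x) (Icc a b) x)
    (hg : ∀ x ∈ Icc a b, HasDerivWithinAt g (-(w x * (g x / k x) + lam * p x)) (Icc a b) x)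
    (hga : g a = 0) (hpa : p a = 1) (hx : x ∈ Icc a b) :
    (lam + 1) * exp (-((1 + (1 + B) / κ) * (b - a))) ≤ (lam + 1) * p x ^ 2 + g x ^ 2 / k x ∧
      (lam + 1) * p x ^ 2 + g x ^ 2 / k x ≤ (lam + 1) * exp ((1 + (1 + B) / κ) * (b - a)) := by
  have hk0 : ∀ x ∈ Icc a b, k x ≠ 0 := fun x hx => (hκ.trans_le (hκk x hx)).ne'
  obtain ⟨hlow, hup⟩ := mul_exp_bounds_of_abs_deriv_le
    (fun y hy => hasDerivWithinAt_energy (hk y hy) (hk0 y hy) (hp y hy) (hg y hy))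
    (fun y hy => abs_energy_deriv_le hlam hκ (hκk y (Ioo_subset_Icc_self hy))
      (hB y (Ioo_subset_Icc_self hy))) hx
  simp only [hga, hpa, one_pow, mul_one, zero_pow two_ne_zero, zero_div, add_zero] at hlow hup
  have hK : 0 ≤ 1 + (1 + B) / κ := by
    have := (abs_nonneg _).trans (hB x hx)
    positivity
  have hxb : (1 + (1 + B) / κ) * (x - a) ≤ (1 + (1 + B) / κ) * (b - a) := by
    gcongr; exact hx.2
  exact ⟨le_trans (by gcongr) hlow, hup.trans (by gcongr)⟩

theorem integral_sq_mul_weight_le {k' : ℝ → ℝ} {κ B M : ℝ} (hab : a ≤ b) (hlam : 0 ≤ lam)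
    (hκ : 0 < κ) (hk : ∀ x ∈ Icc a b, HasDerivWithinAt k (k' x) (Icc a b) x)
    (hκk : ∀ x ∈ Icc a b, κ ≤ k x) (hB : ∀ x ∈ Icc a b, |k' x + 2 * w x| ≤ B)
    (hμc : ContinuousOn μ (Icc a b)) (hμ0 : ∀ x ∈ Icc a b, 0 ≤ μ x)
    (hμM : ∀ x ∈ Icc a b, μ x ≤ M)
    (hp : ∀ x ∈ Icc a b, HasDerivWithinAt p (g x / k x) (Icc a b) x)
    (hg : ∀ x ∈ Icc a b, HasDerivWithinAt g (-(w x * (g x / k x) + lam * p x)) (Icc a b) x)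
    (hga : g a = 0) (hpa : p a = 1) :
    ∫ x in a..b, p x ^ 2 * μ x ≤ M * (b - a) * exp ((1 + (1 + B) / κ) * (b - a)) := by
  set X := exp ((1 + (1 + B) / κ) * (b - a))
  have hsq : ∀ x ∈ Icc a b, p x ^ 2 ≤ X := by
    intro x hx
    have hE := (energy_bounds hlam hκ hk hκk hB hp hg hga hpa hx).2
    have : 0 ≤ g x ^ 2 / k x := div_nonneg (sq_nonneg _) (hκ.le.trans (hκk x hx))
    exact le_of_mul_le_mul_left (by linarith) (by linarith : (0:ℝ) < lam + 1)
  have hpc : ContinuousOn p (Icc a b) := HasDerivWithinAt.continuousOn hp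
  calc ∫ x in a..b, p x ^ 2 * μ x ≤ ∫ _ in a..b, X * M :=
        integral_mono_on hab (((hpc.pow 2).mul hμc).intervalIntegrable_of_Icc hab)
          intervalIntegrable_const fun x hx =>
            mul_le_mul (hsq x hx) (hμM x hx) (hμ0 x hx) (exp_pos _).le
    _ = M * (b - a) * X := by rw [integral_const, smul_eq_mul]; ring

theorem integral_weight_mul_energy (hab : a ≤ b)
    (hk : ContinuousOn k (Icc a b)) (hk0 : ∀ x ∈ Icc a b, k x ≠ 0)
    (hμ : ∀ x ∈ Icc a b, HasDerivWithinAt μ (μ x * (w x / k x)) (Icc a b) x)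
    (hp : ∀ x ∈ Icc a b, HasDerivWithinAt p (g x / k x) (Icc a b) x)
    (hg : ∀ x ∈ Icc a b, HasDerivWithinAt g (-(w x * (g x / k x) + lam * p x)) (Icc a b) x)
    (hga : g a = 0) (hgb : g b = 0) :
    ∫ x in a..b, μ x * ((lam + 1) * p x ^ 2 + g x ^ 2 / k x)
      = (2 * lam + 1) * ∫ x in a..b, p x ^ 2 * μ x := by
  have hμc : ContinuousOn μ (Icc a b) := HasDerivWithinAt.continuousOn hμ
  have hpc : ContinuousOn p (Icc a b) := HasDerivWithinAt.continuousOn hp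
  have hgc : ContinuousOn g (Icc a b) := HasDerivWithinAt.continuousOn hg
  have hsplit : (fun x => μ x * ((lam + 1) * p x ^ 2 + g x ^ 2 / k x))
      = fun x => (lam + 1) * (p x ^ 2 * μ x) + μ x * g x ^ 2 / k x := funext fun x => by ring
  have hint₁ : IntervalIntegrable (fun x => p x ^ 2 * μ x) MeasureTheory.volume a b :=
    ((hpc.pow 2).mul hμc).intervalIntegrable_of_Icc hab
  have hint₂ : IntervalIntegrable (fun x => μ x * g x ^ 2 / k x) MeasureTheory.volume a b :=
    ((hμc.mul (hgc.pow 2)).div hk hk0).intervalIntegrable_of_Icc hab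
  rw [hsplit, integral_add (hint₁.const_mul _) hint₂, integral_const_mul,
    integral_weight_mul_sq_div_eq_mul_integral hab hk hk0 hμ hp hg hga hgb]
  ring

theorem le_integral_sq_mul_weight {k' : ℝ → ℝ} {κ B m : ℝ} (hab : a ≤ b) (hlam : 0 ≤ lam)
    (hκ : 0 < κ) (hk : ∀ x ∈ Icc a b, HasDerivWithinAt k (k' x) (Icc a b) x)
    (hκk : ∀ x ∈ Icc a b, κ ≤ k x) (hB : ∀ x ∈ Icc a b, |k' x + 2 * w x| ≤ B)
    (hμ : ∀ x ∈ Icc a b, HasDerivWithinAt μ (μ x * (w x / k x)) (Icc a b) x)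
    (hm : 0 ≤ m) (hmμ : ∀ x ∈ Icc a b, m ≤ μ x)
    (hp : ∀ x ∈ Icc a b, HasDerivWithinAt p (g x / k x) (Icc a b) x)
    (hg : ∀ x ∈ Icc a b, HasDerivWithinAt g (-(w x * (g x / k x) + lam * p x)) (Icc a b) x)
    (hga : g a = 0) (hgb : g b = 0) (hpa : p a = 1) :
    m * (b - a) / (2 * exp ((1 + (1 + B) / κ) * (b - a))) ≤ ∫ x in a..b, p x ^ 2 * μ x := by
  set X := exp ((1 + (1 + B) / κ) * (b - a))
  set I := ∫ x in a..b, p x ^ 2 * μ x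
  have hk0 : ∀ x ∈ Icc a b, k x ≠ 0 := fun x hx => (hκ.trans_le (hκk x hx)).ne'
  have hkc : ContinuousOn k (Icc a b) := HasDerivWithinAt.continuousOn hk
  have hE : (b - a) * (m * ((lam + 1) * X⁻¹)) ≤ (2 * lam + 1) * I := by
    rw [← integral_weight_mul_energy hab hkc hk0 hμ hp hg hga hgb, ← smul_eq_mul,
      ← integral_const]
    refine integral_mono_on hab intervalIntegrable_const
      (((HasDerivWithinAt.continuousOn hμ).mul ((continuousOn_const.mul
        ((HasDerivWithinAt.continuousOn hp).pow 2)).add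
        (((HasDerivWithinAt.continuousOn hg).pow 2).div hkc hk0))).intervalIntegrable_of_Icc hab)
      fun x hx => ?_
    rw [← exp_neg]
    exact mul_le_mul (hmμ x hx) (energy_bounds hlam hκ hk hκk hB hp hg hga hpa hx).1
      (by positivity) (hm.trans (hmμ x hx))
  have hI : 0 ≤ I := integral_nonneg hab fun x hx => mul_nonneg (sq_nonneg _) (hm.trans (hmμ x hx))
  have hscaled : (lam + 1) * (m * (b - a) / X) ≤ (lam + 1) * (2 * I) :=
    calc (lam + 1) * (m * (b - a) / X) = (b - a) * (m * ((lam + 1) * X⁻¹)) := by ring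
      _ ≤ (2 * lam + 1) * I := hE
      _ ≤ (lam + 1) * (2 * I) := by nlinarith
  have := le_of_mul_le_mul_left hscaled (by linarith)
  calc m * (b - a) / (2 * X) = m * (b - a) / X / 2 := by ring
    _ ≤ I := by linarith

end SturmLiouville

/-- Uniform two-sided bounds on the weighted `L²` norms of the Neumann
Sturm--Liouville eigenfunctions normalized by `p(0) = 1`, with a constant
depending only on `k`, `w` and `h`. -/
theorem eigenfunction_norm_bounds
    (h : ℝ) (hh : 0 < h) (k w : ℝ → ℝ)
    (hk : ContDiffOn ℝ 2 k (Icc 0 h)) (hw : ContDiffOn ℝ 2 w (Icc 0 h))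
    (hkpos : ∀ z ∈ Icc (0:ℝ) h, 0 < k z) :
    ∃ C > (0:ℝ), ∀ (lam : ℝ), 0 ≤ lam → ∀ p : ℝ → ℝ,
      ContDiffOn ℝ 2 p (Icc 0 h) →
      (∀ z ∈ Icc (0:ℝ) h,
        derivWithin (fun y => k y * derivWithin p (Icc 0 h) y) (Icc 0 h) z
          + w z * derivWithin p (Icc 0 h) z + lam * p z = 0) →
      derivWithin p (Icc 0 h) 0 = 0 → derivWithin p (Icc 0 h) h = 0 →
      p 0 = 1 →
      C⁻¹ ≤ (∫ z in (0:ℝ)..h, (p z) ^ 2 * Real.exp (∫ ζ in (0:ℝ)..z, w ζ / k ζ)) ∧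
        (∫ z in (0:ℝ)..h, (p z) ^ 2 * Real.exp (∫ ζ in (0:ℝ)..z, w ζ / k ζ)) ≤ C := by
  have hkc := hk.continuousOn
  have hk0 : ∀ z ∈ Icc (0:ℝ) h, k z ≠ 0 := fun z hz => (hkpos z hz).ne'
  have hk' : ∀ z ∈ Icc (0:ℝ) h, HasDerivWithinAt k (derivWithin k (Icc 0 h) z) (Icc 0 h) z :=
    fun z hz => (hk.differentiableOn two_ne_zero z hz).hasDerivWithinAt
  have hμ : ∀ z ∈ Icc (0:ℝ) h, HasDerivWithinAt (fun z => exp (∫ ζ in (0:ℝ)..z, w ζ / k ζ))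
      (exp (∫ ζ in (0:ℝ)..z, w ζ / k ζ) * (w z / k z)) (Icc 0 h) z :=
    fun z hz => (hasDerivWithinAt_integral_of_continuousOn (hw.continuousOn.div hkc hk0) hz).exp
  have hμc := HasDerivWithinAt.continuousOn hμ
  obtain ⟨κ, hκ, hκk⟩ := isCompact_Icc.exists_forall_le' hkc hkpos
  obtain ⟨m, hm, hmμ⟩ := isCompact_Icc.exists_forall_le' hμc fun z _ => exp_pos _
  obtain ⟨M, hM⟩ := isCompact_Icc.exists_bound_of_continuousOn hμc
  obtain ⟨B, hB⟩ := isCompact_Icc.exists_bound_of_continuousOn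
    ((hk.continuousOn_derivWithin (uniqueDiffOn_Icc hh) one_le_two).add
      (continuousOn_const.mul hw.continuousOn))
  set X := exp ((1 + (1 + B) / κ) * h)
  refine ⟨max (M * h * X) (2 * X / (m * h)), lt_max_of_lt_right (by positivity),
    fun lam hlam p hp hODE hq0 hqh hp0 => ?_⟩
  have hsys := fun z (hz : z ∈ Icc 0 h) => SturmLiouville.hasDerivWithinAt_flux_system_of_contDiffOn
    hh (hk.of_le one_le_two) hk0 hp hODE hz
  have hlow := SturmLiouville.le_integral_sq_mul_weight hh.le hlam hκ hk' hκk hB hμ hm.le hmμ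
    (fun z hz => (hsys z hz).1) (fun z hz => (hsys z hz).2) (by simp [hq0]) (by simp [hqh]) hp0
  have hup := SturmLiouville.integral_sq_mul_weight_le hh.le hlam hκ hk' hκk hB hμc
    (fun z _ => (exp_pos _).le) (fun z hz => (le_abs_self _).trans (hM z hz))
    (fun z hz => (hsys z hz).1) (fun z hz => (hsys z hz).2) (by simp [hq0]) hp0
  rw [sub_zero] at hlow hup
  refine ⟨?_, hup.trans (le_max_left _ _)⟩
  calc (max (M * h * X) (2 * X / (m * h)))⁻¹
      ≤ (2 * X / (m * h))⁻¹ := inv_anti₀ (by positivity) (le_max_right _ _)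
    _ = m * h / (2 * X) := inv_div _ _
    _ ≤ _ := hlow
end

section
/- Let c > 0, b ≥ 0 and T > 0, let (λ_n)_{n≥0} be a sequence of nonnegative reals with |λ_n − c n²| ≤ b for all n, and let (a_n)_{n≥0} be a real sequence with ∑_n a_n² < ∞. Then for each t ∈ [0,T) the series G(t) := ∑_{n=0}^∞ a_n e^{λ_n (t−T)} converges absolutely, and the resulting function G belongs to L²(0,T); moreover |G(t)|² ≤ A' / √(T−t) for some constant A' > 0 and all t ∈ [0,T). -/
/-!
Put `s = T - t`. The hypothesis on `λₙ` gives `e^{2λₙ(t-T)} ≤ e^{2bs} e^{-2cs n²}`, and comparing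
the Gaussian sum with `∫₀^∞ e^{-2cs x²} dx = √(π/(2cs))/2` shows `∑ₙ e^{2λₙ(t-T)} = O(s^{-1/2})`.
By Cauchy–Schwarz, `G(t)² ≤ (∑ aₙ²) ∑ₙ e^{2λₙ(t-T)} = O((T-t)^{-1/2})`, which is integrable on
`(0, T)`, so `G ∈ L²(0, T)`.
-/

open MeasureTheory Set Real

theorem summable_exp_neg_mul_nat_sq {α : ℝ} (hα : 0 < α) :
    Summable fun n : ℕ => exp (-α * n ^ 2) :=
  summable_exp_nat_mul_of_ge (neg_lt_zero.2 hα) fun n => by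
    exact_mod_cast Nat.le_self_pow two_ne_zero n

theorem antitoneOn_exp_neg_mul_sq {α : ℝ} (hα : 0 ≤ α) :
    AntitoneOn (fun x : ℝ => exp (-α * x ^ 2)) (Ici 0) := by
  intro x hx y _ hxy
  have hsq : x ^ 2 ≤ y ^ 2 := pow_le_pow_left₀ hx hxy 2
  exact exp_le_exp.2 (by nlinarith)

-- The terms with `n ≥ 1` are dominated by `∫₀^∞ e^{-αx²} dx`.
theorem tsum_exp_neg_mul_nat_sq_le {α : ℝ} (hα : 0 < α) :
    ∑' n : ℕ, exp (-α * n ^ 2) ≤ 1 + √(π / α) / 2 := by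
  rw [(summable_exp_neg_mul_nat_sq hα).tsum_eq_zero_add]
  rw [Nat.cast_zero, zero_pow two_ne_zero, mul_zero, exp_zero, add_le_add_iff_left]
  refine tsum_le_of_sum_range_le (fun n => (exp_pos _).le) fun N => ?_
  have hanti : AntitoneOn (fun x : ℝ => exp (-α * x ^ 2)) (Icc 0 (0 + N)) :=
    (antitoneOn_exp_neg_mul_sq hα.le).mono Icc_subset_Ici_self
  calc ∑ i ∈ Finset.range N, exp (-α * ((i + 1 : ℕ) : ℝ) ^ 2)
      = ∑ i ∈ Finset.range N, exp (-α * (0 + ((i + 1 : ℕ) : ℝ)) ^ 2) := by simp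
    _ ≤ ∫ x in (0 : ℝ)..0 + N, exp (-α * x ^ 2) := hanti.sum_le_integral
    _ ≤ ∫ x in Ioi 0, exp (-α * x ^ 2) := by
      rw [intervalIntegral.integral_of_le (by positivity)]
      exact setIntegral_mono_set (integrable_exp_neg_mul_sq hα).integrableOn
        (.of_forall fun x => (exp_pos _).le) (.of_forall Ioc_subset_Ioi_self)
    _ = √(π / α) / 2 := integral_gaussian_Ioi α

section CauchySchwarz

variable {ι : Type*} {a w : ι → ℝ}

theorem summable_abs_mul_of_summable_sq (ha : Summable fun i => a i ^ 2)
    (hw : Summable fun i => w i ^ 2) : Summable fun i => |a i * w i| := by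
  refine .of_nonneg_of_le (fun i => abs_nonneg _) (fun i => ?_) ((ha.add hw).div_const 2)
  rw [abs_mul, le_div_iff₀ two_pos, ← sq_abs (a i), ← sq_abs (w i)]
  linarith [two_mul_le_add_sq |a i| |w i|]

theorem sq_tsum_mul_le (ha : Summable fun i => a i ^ 2) (hw : Summable fun i => w i ^ 2) :
    (∑' i, a i * w i) ^ 2 ≤ (∑' i, a i ^ 2) * ∑' i, w i ^ 2 := by
  have hsum : Summable fun i => a i * w i := (summable_abs_mul_of_summable_sq ha hw).of_abs
  refine le_of_tendsto' (hsum.hasSum.pow 2) fun s => ?_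
  calc (∑ i ∈ s, a i * w i) ^ 2 ≤ (∑ i ∈ s, a i ^ 2) * ∑ i ∈ s, w i ^ 2 :=
        Finset.sum_mul_sq_le_sq_mul_sq s a w
    _ ≤ (∑' i, a i ^ 2) * ∑' i, w i ^ 2 :=
        mul_le_mul (ha.sum_le_tsum s fun i _ => sq_nonneg _)
          (hw.sum_le_tsum s fun i _ => sq_nonneg _) (s.sum_nonneg fun i _ => sq_nonneg _)
          (tsum_nonneg fun i => sq_nonneg _)

end CauchySchwarz

section EigenvalueWeights

variable {c b : ℝ} {lam : ℕ → ℝ} {t T : ℝ}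

theorem sq_exp_mul_sub_le (happrox : ∀ n, |lam n - c * (n : ℝ) ^ 2| ≤ b) (ht : t ≤ T) (n : ℕ) :
    exp (lam n * (t - T)) ^ 2 ≤ exp (2 * b * (T - t)) * exp (-(2 * c * (T - t)) * n ^ 2) := by
  have hlower : 0 ≤ lam n - c * n ^ 2 + b := by linarith [(abs_le.1 (happrox n)).1]
  rw [sq, ← exp_add, ← exp_add]
  exact exp_le_exp.2 (by nlinarith [mul_nonneg hlower (sub_nonneg.2 ht)])

theorem summable_sq_exp_mul_sub (hc : 0 < c) (happrox : ∀ n, |lam n - c * (n : ℝ) ^ 2| ≤ b)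
    (ht : t < T) : Summable fun n => exp (lam n * (t - T)) ^ 2 :=
  .of_nonneg_of_le (fun n => sq_nonneg _) (sq_exp_mul_sub_le happrox ht.le)
    ((summable_exp_neg_mul_nat_sq (by nlinarith)).mul_left _)

theorem tsum_sq_exp_mul_sub_le (hc : 0 < c) (hb : 0 ≤ b)
    (happrox : ∀ n, |lam n - c * (n : ℝ) ^ 2| ≤ b) (ht₀ : 0 ≤ t) (ht : t < T) :
    ∑' n, exp (lam n * (t - T)) ^ 2 ≤ exp (2 * b * T) * (√T + √(π / (2 * c)) / 2) / √(T - t) := by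
  have hs : 0 < T - t := sub_pos.2 ht
  have hsqrt : 0 < √(T - t) := sqrt_pos.2 hs
  have hgauss : 1 + √(π / (2 * c * (T - t))) / 2 ≤ (√T + √(π / (2 * c)) / 2) / √(T - t) := by
    have hT : 1 ≤ √T / √(T - t) := (one_le_div hsqrt).2 (sqrt_le_sqrt (by linarith))
    rw [← div_div, sqrt_div' _ hs.le, add_div, div_right_comm _ (√(T - t))]
    linarith
  calc ∑' n, exp (lam n * (t - T)) ^ 2
      ≤ ∑' n : ℕ, exp (2 * b * (T - t)) * exp (-(2 * c * (T - t)) * n ^ 2) :=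
        (summable_sq_exp_mul_sub hc happrox ht).tsum_le_tsum (sq_exp_mul_sub_le happrox ht.le)
          ((summable_exp_neg_mul_nat_sq (by positivity)).mul_left _)
    _ ≤ exp (2 * b * T) * ((√T + √(π / (2 * c)) / 2) / √(T - t)) := by
      rw [tsum_mul_left]
      gcongr
      · nlinarith
      · exact (tsum_exp_neg_mul_nat_sq_le (by positivity)).trans hgauss
    _ = _ := (mul_div_assoc ..).symm

end EigenvalueWeights

theorem integrableOn_div_sqrt_sub (C a T : ℝ) : IntegrableOn (fun t => C / √(T - t)) (Ioo a T) := by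
  have hrpow : IntervalIntegrable (fun x : ℝ => x ^ (-(1 / 2) : ℝ)) volume 0 (T - a) :=
    intervalIntegral.intervalIntegrable_rpow' (by norm_num)
  have hreflect := (hrpow.comp_sub_left T).symm
  rw [sub_zero, sub_sub_cancel, intervalIntegrable_iff] at hreflect
  refine IntegrableOn.congr_fun (f := fun t => C * (T - t) ^ (-(1 / 2) : ℝ))
    ((hreflect.mono_set (Ioo_subset_Ioc_self.trans Ioc_subset_uIoc)).const_mul C)
    (fun t ht => ?_) measurableSet_Ioo
  dsimp only
  rw [rpow_neg (sub_pos.2 ht.2).le, ← sqrt_eq_rpow, div_eq_mul_inv]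

theorem memLp_two_of_ae_sq_le {α : Type*} [MeasurableSpace α] {μ : Measure α} {f g : α → ℝ}
    (hf : AEStronglyMeasurable f μ) (hg : Integrable g μ) (hfg : ∀ᵐ x ∂μ, f x ^ 2 ≤ g x) :
    MemLp f 2 μ :=
  (memLp_two_iff_integrable_sq hf).2 <| hg.mono' (hf.pow 2) <| hfg.mono fun x hx => by
    rwa [norm_of_nonneg (sq_nonneg _)]

theorem exp_series_memL2_general
    (c b T : ℝ) (hc : 0 < c) (hb : 0 ≤ b)
    (lam : ℕ → ℝ)
    (happrox : ∀ n, |lam n - c * (n : ℝ) ^ 2| ≤ b)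
    (a : ℕ → ℝ) (ha : Summable (fun n => (a n) ^ 2)) :
    (∀ t ∈ Ico (0:ℝ) T, Summable (fun n => |a n * Real.exp (lam n * (t - T))|)) ∧
    MemLp (fun t => ∑' n, a n * Real.exp (lam n * (t - T))) 2
      (volume.restrict (Ioo 0 T)) ∧
    ∃ A' > (0:ℝ), ∀ t ∈ Ico (0:ℝ) T,
      (∑' n, a n * Real.exp (lam n * (t - T))) ^ 2 ≤ A' / Real.sqrt (T - t) := by
  set S := ∑' n, a n ^ 2
  set K := exp (2 * b * T) * (√T + √(π / (2 * c)) / 2)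
  have hweights (t : ℝ) (ht : t ∈ Ico 0 T) : Summable fun n => exp (lam n * (t - T)) ^ 2 :=
    summable_sq_exp_mul_sub hc happrox ht.2
  have hbound (t : ℝ) (ht : t ∈ Ico 0 T) :
      (∑' n, a n * exp (lam n * (t - T))) ^ 2 ≤ (S * K + 1) / √(T - t) :=
    calc (∑' n, a n * exp (lam n * (t - T))) ^ 2
        ≤ S * ∑' n, exp (lam n * (t - T)) ^ 2 := sq_tsum_mul_le ha (hweights t ht)
      _ ≤ S * (K / √(T - t)) := by
        gcongr
        exact tsum_sq_exp_mul_sub_le hc hb happrox ht.1 ht.2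
      _ ≤ (S * K + 1) / √(T - t) := by
        rw [mul_div_assoc']
        gcongr
        linarith
  refine ⟨fun t ht => summable_abs_mul_of_summable_sq ha (hweights t ht), ?_,
    S * K + 1, by positivity, hbound⟩
  refine memLp_two_of_ae_sq_le (Measurable.tsum fun n => by fun_prop).aestronglyMeasurable
    (integrableOn_div_sqrt_sub (S * K + 1) 0 T) ?_
  filter_upwards [ae_restrict_mem measurableSet_Ioo] with t ht
    using hbound t (Ioo_subset_Ico_self ht)

/-- For `ℓ²` coefficients `(aₙ)` and eigenvalues growing like `c n²`, the series
`G(t) = ∑ aₙ exp(λₙ (t - T))` converges absolutely for `t ∈ [0,T)`, belongs to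
`L²(0,T)`, and satisfies `|G(t)|² ≤ A' / √(T - t)`. -/
theorem exp_series_memL2
    (c b T : ℝ) (hc : 0 < c) (hb : 0 ≤ b) (hT : 0 < T)
    (lam : ℕ → ℝ) (hlam : ∀ n, 0 ≤ lam n)
    (happrox : ∀ n, |lam n - c * (n : ℝ) ^ 2| ≤ b)
    (a : ℕ → ℝ) (ha : Summable (fun n => (a n) ^ 2)) :
    (∀ t ∈ Ico (0:ℝ) T, Summable (fun n => |a n * Real.exp (lam n * (t - T))|)) ∧
    MemLp (fun t => ∑' n, a n * Real.exp (lam n * (t - T))) 2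
      (volume.restrict (Ioo 0 T)) ∧
    ∃ A' > (0:ℝ), ∀ t ∈ Ico (0:ℝ) T,
      (∑' n, a n * Real.exp (lam n * (t - T))) ^ 2 ≤ A' / Real.sqrt (T - t) :=
  exp_series_memL2_general c b T hc hb lam happrox a ha
end

section
/- Let h > 0, T > 0, k, w ∈ C²([0,h]) with k > 0 on [0,h] and w(0) = w(h) = 0. Let G ∈ C([0,T]) and let q be a classical solution of the transport equation with flux G and initial data q₀ ≡ 0. Let λ ≥ 0 and let ρ ∈ C²([0,h]) satisfy (k ρ')' + w ρ' + λ ρ = 0 on [0,h], ρ'(0) = ρ'(h) = 0, and ρ(0) = 1. Then the function H(t) := ∫₀ʰ ρ(z) q(z,t) dz satisfies the differential equation H'(t) = k(0) G(t) − λ H(t) for t ∈ (0,T], and consequently H(t) = k(0) e^{−λ t} ∫₀ᵗ G(s) e^{λ s} ds for all t ∈ [0,T]. -/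
open MeasureTheory Set Filter intervalIntegral

/-!
Multiply the transport equation by `ρ` and integrate by parts twice in `z`. The interior terms
combine through the adjoint equation `(k ρ')' + w ρ' + λ ρ = 0` into `-λ ∫ ρ q`, and the boundary
terms vanish at `z = h` (no flux, `w h = 0`, `ρ' h = 0`) and reduce at `z = 0` to the injected
flux `k(0) G(t)` (using `w 0 = 0`, `ρ' 0 = 0`, `ρ 0 = 1`). Differentiating under the integral sign
(Fubini plus the fundamental theorem of calculus in `t`) then gives `H' = k(0) G - λ H` on `(0,T]`
with `H(0) = 0`, and the integrating factor `e^{λt}` turns this into the closed formula.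
-/

open Topology

theorem continuousOn_intervalIntegral_of_continuousOn_uncurry {a b c d : ℝ} (hab : a ≤ b)
    {F : ℝ → ℝ → ℝ} (hF : ContinuousOn (Function.uncurry F) (Icc a b ×ˢ Icc c d)) :
    ContinuousOn (fun t => ∫ z in a..b, F z t) (Icc c d) := by
  rcases lt_or_ge d c with hdc | hcd
  · simp [Icc_eq_empty_of_lt hdc]
  -- Clamping both arguments extends `F` continuously from the rectangle to the plane.
  set Fext : ℝ → ℝ → ℝ := fun z t => F (projIcc a b hab z) (projIcc c d hcd t)
  have hFext : Continuous (Function.uncurry Fext) :=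
    hF.comp_continuous
      (f := fun p : ℝ × ℝ => ((projIcc a b hab p.1 : ℝ), (projIcc c d hcd p.2 : ℝ)))
      (by fun_prop) fun p => ⟨(projIcc a b hab p.1).2, (projIcc c d hcd p.2).2⟩
  refine (continuous_parametric_intervalIntegral_of_continuous' (f := fun t z => Fext z t)
    (hFext.comp continuous_swap) a b
    |>.continuousOn).congr fun t ht => integral_congr fun z hz => ?_
  rw [uIcc_of_le hab] at hz
  simp [Fext, projIcc_of_mem _ hz, projIcc_of_mem _ ht]

theorem intervalIntegral_sub_eq_integral_intervalIntegral {a b c d : ℝ} (hab : a ≤ b)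
    (hcd : c ≤ d) {F F' : ℝ → ℝ → ℝ}
    (hF : ContinuousOn (Function.uncurry F) (Icc a b ×ˢ Icc c d))
    (hF' : ContinuousOn (Function.uncurry F') (Icc a b ×ˢ Icc c d))
    (hderiv : ∀ z ∈ Icc a b, ∀ t ∈ Ioo c d, HasDerivAt (F z) (F' z t) t) :
    (∫ z in a..b, F z d) - ∫ z in a..b, F z c = ∫ t in c..d, ∫ z in a..b, F' z t := by
  have hF'int : IntegrableOn (Function.uncurry fun t z => F' z t) (uIoc c d ×ˢ uIoc a b) := by
    rw [uIoc_of_le hab, uIoc_of_le hcd]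
    exact ((hF'.comp continuous_swap.continuousOn fun p hp => ⟨hp.2, hp.1⟩).integrableOn_compact
      (isCompact_Icc.prod isCompact_Icc)).mono_set
      (prod_mono Ioc_subset_Icc_self Ioc_subset_Icc_self)
  rw [intervalIntegral_intervalIntegral_swap hF'int, ← integral_sub
    ((hF.uncurry_right d (right_mem_Icc.2 hcd)).intervalIntegrable_of_Icc hab)
    ((hF.uncurry_right c (left_mem_Icc.2 hcd)).intervalIntegrable_of_Icc hab)]
  refine integral_congr fun z hz => ?_
  rw [uIcc_of_le hab] at hz
  exact (integral_eq_sub_of_hasDerivAt_of_le hcd (hF.uncurry_left z hz) (hderiv z hz)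
    ((hF'.uncurry_left z hz).intervalIntegrable_of_Icc hcd)).symm

theorem hasDerivWithinAt_intervalIntegral_of_continuousOn_uncurry {a b c d : ℝ} (hab : a ≤ b)
    {F F' : ℝ → ℝ → ℝ} (hF : ContinuousOn (Function.uncurry F) (Icc a b ×ˢ Icc c d))
    (hF' : ContinuousOn (Function.uncurry F') (Icc a b ×ˢ Icc c d))
    (hderiv : ∀ z ∈ Icc a b, ∀ t ∈ Ioo c d, HasDerivAt (F z) (F' z t) t) {t : ℝ}
    (ht : t ∈ Icc c d) :
    HasDerivWithinAt (fun t => ∫ z in a..b, F z t) (∫ z in a..b, F' z t) (Icc c d) t := by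
  have hf := continuousOn_intervalIntegral_of_continuousOn_uncurry hab hF'
  have hprimitive : ∀ u ∈ Icc c d,
      (∫ z in a..b, F z u) = (∫ z in a..b, F z c) + ∫ s in c..u, ∫ z in a..b, F' z s := by
    intro u hu
    have hsub : Icc a b ×ˢ Icc c u ⊆ Icc a b ×ˢ Icc c d :=
      prod_mono le_rfl (Icc_subset_Icc le_rfl hu.2)
    rw [← intervalIntegral_sub_eq_integral_intervalIntegral hab hu.1 (hF.mono hsub)
      (hF'.mono hsub)
      fun z hz s hs => hderiv z hz s ⟨hs.1, hs.2.trans_le hu.2⟩]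
    ring
  have : Fact (t ∈ Icc c d) := ⟨ht⟩
  have hint : IntervalIntegrable (fun s => ∫ z in a..b, F' z s) volume c t :=
    (hf.mono (Icc_subset_Icc le_rfl ht.2)).intervalIntegrable_of_Icc ht.1
  exact ((integral_hasDerivWithinAt_right hint
    (hf.stronglyMeasurableAtFilter_nhdsWithin measurableSet_Icc t) (hf t ht)).const_add _
    ).congr_of_mem hprimitive ht

theorem hasDerivWithinAt_intervalIntegral_of_continuousOn_uncurry_Ioc {a b c d : ℝ}
    (hab : a ≤ b) {F F' : ℝ → ℝ → ℝ}
    (hF : ContinuousOn (Function.uncurry F) (Icc a b ×ˢ Icc c d))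
    (hF' : ContinuousOn (Function.uncurry F') (Icc a b ×ˢ Ioc c d))
    (hderiv : ∀ z ∈ Icc a b, ∀ t ∈ Ioo c d, HasDerivAt (F z) (F' z t) t) {t : ℝ}
    (ht : t ∈ Ioc c d) :
    HasDerivWithinAt (fun t => ∫ z in a..b, F z t) (∫ z in a..b, F' z t) (Icc c d) t := by
  obtain ⟨m, hcm, hmt⟩ := exists_between ht.1
  refine (hasDerivWithinAt_intervalIntegral_of_continuousOn_uncurry hab
    (hF.mono (prod_mono le_rfl (Icc_subset_Icc hcm.le le_rfl)))
    (hF'.mono (prod_mono le_rfl fun s hs => ⟨hcm.trans_le hs.1, hs.2⟩))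
    (fun z hz s hs => hderiv z hz s ⟨hcm.trans hs.1, hs.2⟩) ⟨hmt.le, ht.2⟩
    ).mono_of_mem_nhdsWithin ?_
  exact mem_of_superset (inter_mem_nhdsWithin _ (Ioi_mem_nhds hmt))
    fun s hs => ⟨hs.2.le, hs.1.2⟩

theorem integral_mul_eq_boundary_sub_of_adjoint_eigen {a b lam : ℝ} (hab : a ≤ b)
    {k w ρ u u' u'' v : ℝ → ℝ} (hk : DifferentiableOn ℝ k (Icc a b))
    (hw : DifferentiableOn ℝ w (Icc a b)) (hρ : DifferentiableOn ℝ ρ (Icc a b))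
    (hkρ : DifferentiableOn ℝ (fun y => k y * derivWithin ρ (Icc a b) y) (Icc a b))
    (heig : ∀ z ∈ Ioo a b,
      derivWithin (fun y => k y * derivWithin ρ (Icc a b) y) (Icc a b) z
        + w z * derivWithin ρ (Icc a b) z + lam * ρ z = 0)
    (hu : ∀ z ∈ Icc a b, HasDerivWithinAt u (u' z) (Icc a b) z)
    (hu' : ∀ z ∈ Icc a b, HasDerivWithinAt u' (u'' z) (Icc a b) z)
    (hv : IntervalIntegrable v volume a b)
    (hpde : ∀ z ∈ Ioo a b, v z + (derivWithin w (Icc a b) z * u z + w z * u' z)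
      = derivWithin k (Icc a b) z * u' z + k z * u'' z) :
    ∫ z in a..b, ρ z * v z =
      (ρ b * (k b * u' b - w b * u b) - k b * derivWithin ρ (Icc a b) b * u b)
        - (ρ a * (k a * u' a - w a * u a) - k a * derivWithin ρ (Icc a b) a * u a)
        - lam * ∫ z in a..b, ρ z * u z := by
  set ρ' := derivWithin ρ (Icc a b)
  -- Boundary term of Green's formula: the equation for `u` and the adjoint eigen-equation for `ρ`
  -- make its derivative `ρ v + λ ρ u`.
  set g : ℝ → ℝ := fun z => ρ z * (k z * u' z - w z * u z) - k z * ρ' z * u z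
  have hucont : ContinuousOn u (Icc a b) := fun z hz => (hu z hz).continuousWithinAt
  have hu'cont : ContinuousOn u' (Icc a b) := fun z hz => (hu' z hz).continuousWithinAt
  have hρv : IntervalIntegrable (fun z => ρ z * v z) volume a b :=
    hv.continuousOn_mul (uIcc_of_le hab ▸ hρ.continuousOn)
  have hρu : IntervalIntegrable (fun z => ρ z * u z) volume a b :=
    (hρ.continuousOn.mul hucont).intervalIntegrable_of_Icc hab
  have hg : ContinuousOn g (Icc a b) :=
    (hρ.continuousOn.mul ((hk.continuousOn.mul hu'cont).sub (hw.continuousOn.mul hucont))).sub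
      (hkρ.continuousOn.mul hucont)
  have hg' : ∀ z ∈ Ioo a b, HasDerivAt g (ρ z * v z + lam * (ρ z * u z)) z := by
    intro z hz
    have hnhds : Icc a b ∈ 𝓝 z := Icc_mem_nhds hz.1 hz.2
    have hderivAt : ∀ {f : ℝ → ℝ}, DifferentiableOn ℝ f (Icc a b) →
        HasDerivAt f (derivWithin f (Icc a b) z) z := fun hf =>
      (hf z (Ioo_subset_Icc_self hz)).hasDerivWithinAt.hasDerivAt hnhds
    have hdu := (hu z (Ioo_subset_Icc_self hz)).hasDerivAt hnhds
    have hdu' := (hu' z (Ioo_subset_Icc_self hz)).hasDerivAt hnhds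
    refine (((hderivAt hρ).mul (((hderivAt hk).mul hdu').sub ((hderivAt hw).mul hdu))).sub
      ((hderivAt hkρ).mul hdu)).congr_deriv ?_
    simp only [Pi.mul_apply, Pi.sub_apply]
    linear_combination (-(ρ z)) * hpde z hz - u z * heig z hz
  have hftc := integral_eq_sub_of_hasDerivAt_of_le hab hg hg' (hρv.add (hρu.const_mul lam))
  rw [integral_add hρv (hρu.const_mul lam), intervalIntegral.integral_const_mul] at hftc
  linear_combination hftc

theorem eq_exp_mul_integral_of_hasDerivAt_eq_sub_mul {a b lam : ℝ} {H f : ℝ → ℝ}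
    (hH : ContinuousOn H (Icc a b)) (hf : ContinuousOn f (Icc a b)) (hHa : H a = 0)
    (hderiv : ∀ t ∈ Ioo a b, HasDerivAt H (f t - lam * H t) t) {t : ℝ} (ht : t ∈ Icc a b) :
    H t = Real.exp (-lam * t) * ∫ s in a..t, f s * Real.exp (lam * s) := by
  have hab : a ≤ b := ht.1.trans ht.2
  set e : ℝ → ℝ := fun s => Real.exp (lam * s)
  have hfe : ContinuousOn (fun s => f s * e s) (Icc a b) := hf.mul (by fun_prop)
  -- Integrating factor: `D` has zero derivative.
  set D : ℝ → ℝ := fun s => e s * H s - ∫ r in a..s, f r * e r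
  have hD : ContinuousOn D (Icc a b) := by
    refine ((by fun_prop : Continuous e).continuousOn.mul hH).sub ?_
    have := continuousOn_primitive_interval' (hfe.intervalIntegrable_of_Icc (μ := volume) hab)
      left_mem_uIcc
    rwa [uIcc_of_le hab] at this
  have hD' : ∀ s ∈ Ioo a b, HasDerivAt D 0 s := by
    intro s hs
    have hint : IntervalIntegrable (fun s => f s * e s) volume a s :=
      (hfe.mono (Icc_subset_Icc le_rfl hs.2.le)).intervalIntegrable_of_Icc hs.1.le
    have hcont : ContinuousAt (fun s => f s * e s) s :=
      hfe.continuousAt (Icc_mem_nhds hs.1 hs.2)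
    have he : HasDerivAt e (e s * lam) s := by
      simpa using ((hasDerivAt_id s).const_mul lam).exp
    refine ((he.mul (hderiv s hs)).sub (integral_hasDerivAt_right hint
      ((hfe.mono Ioo_subset_Icc_self).stronglyMeasurableAtFilter isOpen_Ioo s hs) hcont)
      ).congr_deriv ?_
    ring
  have hDt : D t = D a := by
    rcases ht.1.eq_or_lt with rfl | hat
    · rfl
    obtain ⟨c, -, hc⟩ := exists_hasDerivAt_eq_slope D (fun _ => 0) hat
      (hD.mono (Icc_subset_Icc le_rfl ht.2))
      fun s hs => hD' s ⟨hs.1, hs.2.trans_le ht.2⟩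
    rw [eq_comm, div_eq_zero_iff, sub_eq_zero] at hc
    exact hc.resolve_right (sub_ne_zero.2 hat.ne')
  have hDa : D a = 0 := by simp [D, hHa]
  have hexp : Real.exp (-lam * t) * e t = 1 := by
    rw [← Real.exp_add]; simp
  rw [hDa, sub_eq_zero] at hDt
  rw [← hDt, ← mul_assoc, hexp, one_mul]

theorem weighted_observation_ode_general
    (h T : ℝ) (hh : 0 < h) (k w G : ℝ → ℝ)
    (hk : ContDiffOn ℝ 2 k (Icc 0 h)) (hw : ContDiffOn ℝ 2 w (Icc 0 h))
    (hw0 : w 0 = 0) (hwh : w h = 0)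
    (hG : ContinuousOn G (Icc 0 T))
    (q : ℝ → ℝ → ℝ) (hq : IsClassicalSolution h T k w G (fun _ => 0) q)
    (lam : ℝ) (ρ : ℝ → ℝ) (hρ : ContDiffOn ℝ 2 ρ (Icc 0 h))
    (heig : ∀ z ∈ Icc (0:ℝ) h,
      derivWithin (fun y => k y * derivWithin ρ (Icc 0 h) y) (Icc 0 h) z
        + w z * derivWithin ρ (Icc 0 h) z + lam * ρ z = 0)
    (hb0 : derivWithin ρ (Icc 0 h) 0 = 0) (hbh : derivWithin ρ (Icc 0 h) h = 0)
    (hnorm : ρ 0 = 1) :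
    (∀ t ∈ Ioc (0:ℝ) T,
      HasDerivWithinAt (fun t' => ∫ z in (0:ℝ)..h, ρ z * q z t')
        (k 0 * G t - lam * ∫ z in (0:ℝ)..h, ρ z * q z t) (Icc 0 T) t) ∧
    (∀ t ∈ Icc (0:ℝ) T,
      (∫ z in (0:ℝ)..h, ρ z * q z t)
        = k 0 * Real.exp (-lam * t) * ∫ s in (0:ℝ)..t, G s * Real.exp (lam * s)) := by
  obtain ⟨qz, qzz, qt, S⟩ := hq
  set H : ℝ → ℝ := fun t => ∫ z in (0:ℝ)..h, ρ z * q z t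
  have hρ' : ContDiffOn ℝ 1 (derivWithin ρ (Icc 0 h)) (Icc 0 h) :=
    hρ.derivWithin (uniqueDiffOn_Icc hh) le_rfl
  have hρq : ContinuousOn (Function.uncurry fun z t => ρ z * q z t) (Icc 0 h ×ˢ Icc 0 T) :=
    (hρ.continuousOn.comp continuous_fst.continuousOn fun x hx => hx.1).mul S.cont
  have hρqt : ContinuousOn (Function.uncurry fun z t => ρ z * qt z t) (Icc 0 h ×ˢ Ioc 0 T) :=
    (hρ.continuousOn.comp continuous_fst.continuousOn fun x hx => hx.1).mul S.cont_t
  have hslice : ∀ t ∈ Ioc (0:ℝ) T,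
      ∫ z in (0:ℝ)..h, ρ z * qt z t = k 0 * G t - lam * H t := by
    intro t ht
    rw [integral_mul_eq_boundary_sub_of_adjoint_eigen hh.le (hk.differentiableOn two_ne_zero)
      (hw.differentiableOn two_ne_zero) (hρ.differentiableOn two_ne_zero)
      (((hk.of_le one_le_two).mul hρ').differentiableOn one_ne_zero)
      (fun z hz => heig z (Ioo_subset_Icc_self hz)) (fun z hz => S.hasDeriv_z z hz t ht)
      (fun z hz => S.hasDeriv_zz z hz t ht)
      ((ContinuousOn.uncurry_right (f := qt) t ht S.cont_t).intervalIntegrable_of_Icc hh.le)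
      (fun z hz => S.pde z (Ioo_subset_Icc_self hz) t ht)]
    simp [S.bc_lower t ht, S.bc_upper t ht, hw0, hwh, hb0, hbh, hnorm, H]
  have hderiv : ∀ t ∈ Ioc (0:ℝ) T, HasDerivWithinAt H (k 0 * G t - lam * H t) (Icc 0 T) t :=
    fun t ht => hslice t ht ▸ hasDerivWithinAt_intervalIntegral_of_continuousOn_uncurry_Ioc hh.le
      hρq hρqt (fun z hz s hs => ((S.hasDeriv_t z hz s ⟨hs.1, hs.2.le⟩).hasDerivAt
        (Icc_mem_nhds hs.1 hs.2)).const_mul (ρ z)) ht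
  have hH0 : H 0 = 0 := by
    refine (integral_congr fun z hz => ?_).trans integral_zero
    rw [uIcc_of_le hh.le] at hz
    simp [S.ic z hz]
  refine ⟨hderiv, fun t ht => ?_⟩
  rw [eq_exp_mul_integral_of_hasDerivAt_eq_sub_mul (f := fun s => k 0 * G s)
    (continuousOn_intervalIntegral_of_continuousOn_uncurry hh.le hρq) (continuousOn_const.mul hG)
    hH0 (fun s hs => (hderiv s ⟨hs.1, hs.2.le⟩).hasDerivAt (Icc_mem_nhds hs.1 hs.2)) ht]
  simp only [mul_assoc, intervalIntegral.integral_const_mul]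
  ring

/-- If `ρ` is a Neumann eigenfunction of the adjoint operator with eigenvalue `λ`,
normalized by `ρ(0) = 1`, and `q` solves the transport equation with flux `G` and
zero initial data, then `H(t) = ∫₀ʰ ρ q(·,t)` solves `H' = k(0) G - λ H`, hence
`H(t) = k(0) e^{-λt} ∫₀ᵗ G(s) e^{λs} ds`. -/
theorem weighted_observation_ode
    (h T : ℝ) (hh : 0 < h) (hT : 0 < T) (k w G : ℝ → ℝ)
    (hk : ContDiffOn ℝ 2 k (Icc 0 h)) (hw : ContDiffOn ℝ 2 w (Icc 0 h))
    (hkpos : ∀ z ∈ Icc (0:ℝ) h, 0 < k z)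
    (hw0 : w 0 = 0) (hwh : w h = 0)
    (hG : ContinuousOn G (Icc 0 T))
    (q : ℝ → ℝ → ℝ) (hq : IsClassicalSolution h T k w G (fun _ => 0) q)
    (lam : ℝ) (hlam : 0 ≤ lam) (ρ : ℝ → ℝ) (hρ : ContDiffOn ℝ 2 ρ (Icc 0 h))
    (heig : ∀ z ∈ Icc (0:ℝ) h,
      derivWithin (fun y => k y * derivWithin ρ (Icc 0 h) y) (Icc 0 h) z
        + w z * derivWithin ρ (Icc 0 h) z + lam * ρ z = 0)
    (hb0 : derivWithin ρ (Icc 0 h) 0 = 0) (hbh : derivWithin ρ (Icc 0 h) h = 0)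
    (hnorm : ρ 0 = 1) :
    (∀ t ∈ Ioc (0:ℝ) T,
      HasDerivWithinAt (fun t' => ∫ z in (0:ℝ)..h, ρ z * q z t')
        (k 0 * G t - lam * ∫ z in (0:ℝ)..h, ρ z * q z t) (Icc 0 T) t) ∧
    (∀ t ∈ Icc (0:ℝ) T,
      (∫ z in (0:ℝ)..h, ρ z * q z t)
        = k 0 * Real.exp (-lam * t) * ∫ s in (0:ℝ)..t, G s * Real.exp (lam * s)) :=
  weighted_observation_ode_general h T hh k w G hk hw hw0 hwh hG q hq lam ρ hρ heig hb0 hbh hnorm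
end

section
/- Let h > 0, T ∈ ℝ, and k, w ∈ C²([0,h]) with k > 0 on [0,h] and w(0) = w(h) = 0. Let ρ ∈ C¹([0,h]) be monotone increasing. Suppose p : [0,h] × (−∞,T] → ℝ is continuous, is infinitely differentiable on [0,h] × (−∞,T), satisfies the backward adjoint equation p_t + (k p_z)_z + w p_z = 0 on [0,h] × (−∞,T), the Neumann boundary conditions p_z(0,t) = p_z(h,t) = 0 for all t < T, and the terminal condition p(z,T) = ρ(z) for z ∈ [0,h]. Then the function t ↦ p(0,t) is nonincreasing on (−∞,T]. Similarly, if ρ is monotone decreasing, then t ↦ p(0,t) is nondecreasing. -/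
open Set

open Set Filter Topology

/-- If `f` has derivative `f'` at `a` and `f(a) ≤ f(t)` on `[a,b]` with `a < b`,
then `0 ≤ f'`. -/
lemma deriv_nonneg_of_right_min {f : ℝ → ℝ} {f' a b : ℝ} (hab : a < b)
    (hf : HasDerivAt f f' a) (hmin : ∀ t ∈ Icc a b, f a ≤ f t) : 0 ≤ f' := by
  have hs : HasDerivWithinAt f f' (Ioi a) a := hf.hasDerivWithinAt
  have hsl : Tendsto (slope f a) (𝓝[Ioi a \ {a}] a) (𝓝 f') :=
    hasDerivWithinAt_iff_tendsto_slope.mp hs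
  rw [Set.diff_singleton_eq_self (by simp)] at hsl
  refine ge_of_tendsto hsl ?_
  filter_upwards [Ioc_mem_nhdsGT_of_mem ⟨le_refl a, hab⟩] with t ht
  rw [slope_def_field]
  exact div_nonneg (sub_nonneg.2 (hmin t ⟨ht.1.le, ht.2⟩)) (sub_nonneg.2 ht.1.le)

/-- Second-order condition at a left endpoint minimum: if `f` is C¹-ish on `[lo,hi]`
with derivative `g`, `g a = 0`, `f` has a minimum at `a` on `[a,b] ⊆ [lo,hi]`, and `g`
has derivative `g'` at `a` within `[lo,hi]`, then `0 ≤ g'`. -/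
lemma second_deriv_nonneg_left {f g : ℝ → ℝ} {lo hi a b g' : ℝ}
    (hf : ∀ z ∈ Icc lo hi, HasDerivWithinAt f (g z) (Icc lo hi) z)
    (hg : HasDerivWithinAt g g' (Icc lo hi) a)
    (hga : g a = 0) (hab : a < b) (hsub : Icc a b ⊆ Icc lo hi)
    (hmin : ∀ z ∈ Icc a b, f a ≤ f z) : 0 ≤ g' := by
  by_contra hneg
  push_neg at hneg
  have hsl : Tendsto (slope g a) (𝓝[Icc a b \ {a}] a) (𝓝 g') :=
    hasDerivWithinAt_iff_tendsto_slope.mp (hg.mono hsub)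
  rw [Set.Icc_diff_left] at hsl
  have hev : ∀ᶠ z in 𝓝[Ioc a b] a, slope g a z < 0 := hsl.eventually_lt_const hneg
  rw [eventually_nhdsWithin_iff, Metric.eventually_nhds_iff] at hev
  obtain ⟨ε, hε, hev⟩ := hev
  set c : ℝ := min b (a + ε/2) with hc
  have hac : a < c := lt_min hab (by linarith)
  have hcb : c ≤ b := min_le_left _ _
  have hgneg : ∀ z ∈ Ioc a c, g z < 0 := by
    intro z hz
    have h1 : z ∈ Ioc a b := ⟨hz.1, hz.2.trans hcb⟩
    have h2 : dist z a < ε := by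
      rw [Real.dist_eq, abs_of_pos (by linarith [hz.1])]
      have := hz.2.trans (min_le_right b (a + ε/2))
      linarith
    have := hev h2 h1
    rw [slope_def_field, hga, sub_zero] at this
    have hza : 0 < z - a := by linarith [hz.1]
    rcases div_neg_iff.mp this with ⟨_, h⟩ | ⟨h, _⟩
    · linarith
    · exact h
  have hanti : StrictAntiOn f (Icc a c) := by
    apply strictAntiOn_of_deriv_neg (convex_Icc a c)
    · have hcf : ContinuousOn f (Icc lo hi) := fun z hz => (hf z hz).continuousWithinAt
      exact hcf.mono (fun z hz => hsub ⟨hz.1, hz.2.trans hcb⟩)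
    · intro x hx
      rw [interior_Icc] at hx
      have hxm : x ∈ Icc lo hi := hsub ⟨hx.1.le, hx.2.le.trans hcb⟩
      have hxint : Icc lo hi ∈ 𝓝 x := by
        have h1 : lo ≤ a := (hsub ⟨le_rfl, hab.le⟩).1
        have h2 : b ≤ hi := (hsub ⟨hab.le, le_rfl⟩).2
        exact Icc_mem_nhds (by linarith [hx.1]) (by linarith [hx.2, hcb])
      have := (hf x hxm).hasDerivAt hxint
      rw [this.deriv]
      exact hgneg x ⟨hx.1, hx.2.le⟩
  have h1 := hanti (left_mem_Icc.2 hac.le) (right_mem_Icc.2 hac.le) hac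
  have h2 := hmin c ⟨hac.le, hcb⟩
  linarith

/-- Second-order condition at a right endpoint minimum. -/
lemma second_deriv_nonneg_right {f g : ℝ → ℝ} {lo hi a b g' : ℝ}
    (hf : ∀ z ∈ Icc lo hi, HasDerivWithinAt f (g z) (Icc lo hi) z)
    (hg : HasDerivWithinAt g g' (Icc lo hi) b)
    (hgb : g b = 0) (hab : a < b) (hsub : Icc a b ⊆ Icc lo hi)
    (hmin : ∀ z ∈ Icc a b, f b ≤ f z) : 0 ≤ g' := by
  by_contra hneg
  push_neg at hneg
  have hsl : Tendsto (slope g b) (𝓝[Icc a b \ {b}] b) (𝓝 g') :=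
    hasDerivWithinAt_iff_tendsto_slope.mp (hg.mono hsub)
  rw [Set.Icc_sdiff_right] at hsl
  have hev : ∀ᶠ z in 𝓝[Ico a b] b, slope g b z < 0 := hsl.eventually_lt_const hneg
  rw [eventually_nhdsWithin_iff, Metric.eventually_nhds_iff] at hev
  obtain ⟨ε, hε, hev⟩ := hev
  set c : ℝ := max a (b - ε/2) with hc
  have hcb : c < b := max_lt hab (by linarith)
  have hac : a ≤ c := le_max_left _ _
  have hgpos : ∀ z ∈ Ico c b, 0 < g z := by
    intro z hz
    have h1 : z ∈ Ico a b := ⟨hac.trans hz.1, hz.2⟩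
    have h2 : dist z b < ε := by
      rw [Real.dist_eq, abs_of_neg (by linarith [hz.2])]
      have := (le_max_right a (b - ε/2)).trans hz.1
      linarith
    have := hev h2 h1
    rw [slope_def_field, hgb, sub_zero] at this
    have hzb : z - b < 0 := by linarith [hz.2]
    rcases div_neg_iff.mp this with ⟨h, _⟩ | ⟨_, h⟩
    · exact h
    · linarith
  have hmono : StrictMonoOn f (Icc c b) := by
    apply strictMonoOn_of_deriv_pos (convex_Icc c b)
    · have hcf : ContinuousOn f (Icc lo hi) := fun z hz => (hf z hz).continuousWithinAt
      exact hcf.mono (fun z hz => hsub ⟨hac.trans hz.1, hz.2⟩)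
    · intro x hx
      rw [interior_Icc] at hx
      have hxm : x ∈ Icc lo hi := hsub ⟨hac.trans hx.1.le, hx.2.le⟩
      have hxint : Icc lo hi ∈ 𝓝 x := by
        have h1 : lo ≤ a := (hsub ⟨le_rfl, hab.le⟩).1
        have h2 : b ≤ hi := (hsub ⟨hab.le, le_rfl⟩).2
        exact Icc_mem_nhds (by linarith [hx.1, hac]) (by linarith [hx.2])
      have := (hf x hxm).hasDerivAt hxint
      rw [this.deriv]
      exact hgpos x ⟨hx.1.le, hx.2⟩
  have h1 := hmono (left_mem_Icc.2 hcb.le) (right_mem_Icc.2 hcb.le) hcb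
  have h2 := hmin c ⟨hac, hcb.le⟩
  linarith

theorem surface_core
    (h T : ℝ) (hh : 0 < h) (k w : ℝ → ℝ)
    (hkpos : ∀ z ∈ Icc (0:ℝ) h, 0 < k z)
    (ρ : ℝ → ℝ)
    (p pz pzz pt : ℝ → ℝ → ℝ)
    (hcont : ContinuousOn (fun x : ℝ × ℝ => p x.1 x.2) (Icc 0 h ×ˢ Iic T))
    (hpz : ∀ z ∈ Icc (0:ℝ) h, ∀ t ∈ Iio T,
      HasDerivWithinAt (fun z' => p z' t) (pz z t) (Icc 0 h) z)
    (hpzz : ∀ z ∈ Icc (0:ℝ) h, ∀ t ∈ Iio T,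
      HasDerivWithinAt (fun z' => pz z' t) (pzz z t) (Icc 0 h) z)
    (hpt : ∀ z ∈ Icc (0:ℝ) h, ∀ t ∈ Iio T,
      HasDerivWithinAt (fun t' => p z t') (pt z t) (Iio T) t)
    (hpde : ∀ z ∈ Icc (0:ℝ) h, ∀ t ∈ Iio T,
      pt z t + (derivWithin k (Icc 0 h) z * pz z t + k z * pzz z t)
        + w z * pz z t = 0)
    (hbc0 : ∀ t ∈ Iio T, pz 0 t = 0) (hbch : ∀ t ∈ Iio T, pz h t = 0)
    (hterm : ∀ z ∈ Icc (0:ℝ) h, p z T = ρ z)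
    (hρm : MonotoneOn ρ (Icc 0 h)) :
    AntitoneOn (fun t => p 0 t) (Iic T) := by
  -- Step 1: p is monotone in z for every t ≤ T
  have key : ∀ t0 ≤ T, ∀ z1 z2 : ℝ, 0 ≤ z1 → z1 ≤ z2 → z2 ≤ h → p z1 t0 ≤ p z2 t0 := by
    intro t0 ht0 z1 z2 hz1 hz12 hz2
    by_contra hcon
    push_neg at hcon
    set ε : ℝ := (p z1 t0 - p z2 t0) / (2 * (T - t0) + 1) with hεdef
    have hε : 0 < ε := div_pos (by linarith) (by linarith)
    have hq0neg : p z2 t0 - p z1 t0 + ε * (T - t0) < 0 := by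
      have h1 : ε * (T - t0) < p z1 t0 - p z2 t0 := by
        rw [hεdef, div_mul_eq_mul_div, div_lt_iff₀ (by linarith)]
        nlinarith
      linarith
    set K : Set (ℝ × ℝ × ℝ) :=
      {q | 0 ≤ q.1 ∧ q.1 ≤ q.2.1 ∧ q.2.1 ≤ h ∧ t0 ≤ q.2.2 ∧ q.2.2 ≤ T} with hKdef
    set g : ℝ × ℝ × ℝ → ℝ :=
      fun q => p q.2.1 q.2.2 - p q.1 q.2.2 + ε * (T - q.2.2) with hgdef
    have hq0K : (z1, z2, t0) ∈ K := ⟨hz1, hz12, hz2, le_rfl, ht0⟩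
    have hKcomp : IsCompact K := by
      apply IsCompact.of_isClosed_subset
        (isCompact_Icc.prod (isCompact_Icc.prod isCompact_Icc) :
          IsCompact ((Icc (0:ℝ) h) ×ˢ (Icc (0:ℝ) h) ×ˢ (Icc t0 T)))
      · apply IsClosed.inter (isClosed_le continuous_const continuous_fst)
        apply IsClosed.inter (isClosed_le continuous_fst (continuous_fst.comp continuous_snd))
        apply IsClosed.inter (isClosed_le (continuous_fst.comp continuous_snd) continuous_const)
        exact IsClosed.inter (isClosed_le continuous_const (continuous_snd.comp continuous_snd))
          (isClosed_le (continuous_snd.comp continuous_snd) continuous_const)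
      · rintro ⟨a, b, s⟩ ⟨h1, h2, h3, h4, h5⟩
        exact ⟨⟨h1, le_trans h2 h3⟩, ⟨le_trans h1 h2, h3⟩, h4, h5⟩
    have hmapsTo2 : ∀ q ∈ K, (q.2.1, q.2.2) ∈ Icc (0:ℝ) h ×ˢ Iic T :=
      fun q hq => ⟨⟨le_trans hq.1 hq.2.1, hq.2.2.1⟩, hq.2.2.2.2⟩
    have hmapsTo1 : ∀ q ∈ K, (q.1, q.2.2) ∈ Icc (0:ℝ) h ×ˢ Iic T :=
      fun q hq => ⟨⟨hq.1, le_trans hq.2.1 hq.2.2.1⟩, hq.2.2.2.2⟩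
    have hgc : ContinuousOn g K := by
      have h1 : ContinuousOn (fun q : ℝ × ℝ × ℝ => p q.2.1 q.2.2) K :=
        hcont.comp (Continuous.continuousOn (by fun_prop :
          Continuous fun q : ℝ × ℝ × ℝ => (q.2.1, q.2.2))) hmapsTo2
      have h2 : ContinuousOn (fun q : ℝ × ℝ × ℝ => p q.1 q.2.2) K :=
        hcont.comp (Continuous.continuousOn (by fun_prop :
          Continuous fun q : ℝ × ℝ × ℝ => (q.1, q.2.2))) hmapsTo1
      exact (h1.sub h2).add (Continuous.continuousOn (by fun_prop))
    obtain ⟨⟨a, b, s⟩, hmemK, hminOn⟩ := hKcomp.exists_isMinOn ⟨_, hq0K⟩ hgc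
    have ha0 : (0:ℝ) ≤ a := hmemK.1
    have hab : a ≤ b := hmemK.2.1
    have hbh : b ≤ h := hmemK.2.2.1
    have hst0 : t0 ≤ s := hmemK.2.2.2.1
    have hsT : s ≤ T := hmemK.2.2.2.2
    have hgval : ∀ x y t : ℝ, g (x, y, t) = p y t - p x t + ε * (T - t) :=
      fun _ _ _ => rfl
    have hmin : ∀ q ∈ K, g (a, b, s) ≤ g q := fun q hq => hminOn hq
    have hgstar : g (a, b, s) < 0 := lt_of_le_of_lt (hmin _ hq0K) hq0neg
    -- a < b
    have haltb : a < b := by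
      rcases lt_or_eq_of_le hab with h' | h'
      · exact h'
      · exfalso
        have : g (a, b, s) = ε * (T - s) := by rw [hgval, ← h']; ring
        rw [this] at hgstar
        nlinarith
    -- s < T
    have hsltT : s < T := by
      rcases lt_or_eq_of_le hsT with h' | h'
      · exact h'
      · exfalso
        have hA : a ∈ Icc (0:ℝ) h := ⟨ha0, le_trans hab hbh⟩
        have hB : b ∈ Icc (0:ℝ) h := ⟨le_trans ha0 hab, hbh⟩
        have : g (a, b, s) = ρ b - ρ a := by
          rw [hgval, h', hterm a hA, hterm b hB]; ring
        rw [this] at hgstar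
        have := hρm hA hB hab
        linarith
    have hA : a ∈ Icc (0:ℝ) h := ⟨ha0, le_trans hab hbh⟩
    have hB : b ∈ Icc (0:ℝ) h := ⟨le_trans ha0 hab, hbh⟩
    have hsIio : s ∈ Iio T := hsltT
    -- time derivative at the minimum
    have htime : 0 ≤ pt b s - pt a s - ε := by
      have hder : HasDerivAt (fun t => p b t - p a t + ε * (T - t))
          (pt b s - pt a s - ε) s := by
        have h1 : HasDerivAt (fun t => p b t) (pt b s) s :=
          (hpt b hB s hsIio).hasDerivAt (Iio_mem_nhds hsltT)
        have h2 : HasDerivAt (fun t => p a t) (pt a s) s :=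
          (hpt a hA s hsIio).hasDerivAt (Iio_mem_nhds hsltT)
        have h3 : HasDerivAt (fun t : ℝ => ε * (T - t)) (-ε) s := by
          simpa using ((hasDerivAt_id s).const_sub T).const_mul ε
        have h4 : pt b s - pt a s - ε = pt b s - pt a s + -ε := by ring
        rw [h4]
        exact (h1.sub h2).add h3
      apply deriv_nonneg_of_right_min hsltT hder
      intro t ht
      have htK : (a, b, t) ∈ K := ⟨ha0, hab, hbh, le_trans hst0 ht.1, ht.2⟩
      exact hmin _ htK
    -- spatial minimum at b (in z2 direction): pz b s = 0 and 0 ≤ pzz b s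
    have hminb : ∀ z ∈ Icc a h, p b s ≤ p z s := by
      intro z hz
      have hzK : (a, z, s) ∈ K := ⟨ha0, hz.1, hz.2, hst0, hsT⟩
      have := hmin _ hzK
      simp only [hgval] at this
      linarith
    have hpzb : pz b s = 0 := by
      rcases lt_or_eq_of_le hbh with hblt | hbeq
      · -- interior local min
        have hloc : IsLocalMin (fun z => p z s) b := by
          have : Icc a h ∈ 𝓝 b := Icc_mem_nhds haltb hblt
          exact Filter.eventually_of_mem this hminb
        have hder : HasDerivAt (fun z => p z s) (pz b s) b :=
          (hpz b hB s hsIio).hasDerivAt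
            (Icc_mem_nhds (lt_of_le_of_lt ha0 haltb) hblt)
        exact hloc.hasDerivAt_eq_zero hder
      · rw [hbeq]; exact hbch s hsIio
    have hpzzb : 0 ≤ pzz b s := by
      rcases lt_or_eq_of_le hbh with hblt | hbeq
      · apply second_deriv_nonneg_left (fun z hz => hpz z hz s hsIio)
          (hpzz b hB s hsIio) hpzb hblt
        · exact Icc_subset_Icc (le_trans ha0 hab) le_rfl
        · exact fun z hz => hminb z ⟨le_trans hab hz.1, hz.2⟩
      · subst hbeq
        apply second_deriv_nonneg_right (fun z hz => hpz z hz s hsIio)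
          (hpzz b hB s hsIio) hpzb haltb
        · exact Icc_subset_Icc ha0 le_rfl
        · exact fun z hz => hminb z hz
    -- spatial minimum at a (in z1 direction): pz a s = 0 and pzz a s ≤ 0
    have hmina : ∀ z ∈ Icc 0 b, - p a s ≤ - p z s := by
      intro z hz
      have hzK : (z, b, s) ∈ K := ⟨hz.1, hz.2, hbh, hst0, hsT⟩
      have := hmin _ hzK
      simp only [hgval] at this
      linarith
    have hpza : pz a s = 0 := by
      rcases eq_or_lt_of_le ha0 with haeq | halt
      · rw [← haeq]; exact hbc0 s hsIio
      · have hloc : IsLocalMin (fun z => - p z s) a := by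
          have : Icc (0:ℝ) b ∈ 𝓝 a := Icc_mem_nhds halt haltb
          exact Filter.eventually_of_mem this hmina
        have hder : HasDerivAt (fun z => - p z s) (- pz a s) a :=
          ((hpz a hA s hsIio).hasDerivAt
            (Icc_mem_nhds halt (lt_of_lt_of_le haltb hbh))).neg
        have := hloc.hasDerivAt_eq_zero hder
        linarith
    have hpzza : pzz a s ≤ 0 := by
      have hneg : 0 ≤ - pzz a s := by
        apply second_deriv_nonneg_left
          (f := fun z => - p z s) (g := fun z => - pz z s)
          (fun z hz => (hpz z hz s hsIio).neg)
          ((hpzz a hA s hsIio).neg) (by show -pz a s = 0; rw [hpza, neg_zero]) haltb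
        · exact Icc_subset_Icc ha0 (le_trans hbh le_rfl)
        · exact fun z hz => hmina z ⟨le_trans ha0 hz.1, hz.2⟩
      linarith
    -- contradiction via the PDE
    have hpdeb := hpde b hB s hsIio
    have hpdea := hpde a hA s hsIio
    rw [hpzb] at hpdeb
    rw [hpza] at hpdea
    have hkb := hkpos b hB
    have hka := hkpos a hA
    have h1 : 0 ≤ k b * pzz b s := mul_nonneg hkb.le hpzzb
    have h2 : k a * pzz a s ≤ 0 := mul_nonpos_of_nonneg_of_nonpos hka.le hpzza
    have hptb : pt b s ≤ 0 := by nlinarith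
    have hpta : 0 ≤ pt a s := by nlinarith
    linarith
  -- Step 2: 0 ≤ pzz 0 t for t < T
  have h0m : (0:ℝ) ∈ Icc (0:ℝ) h := ⟨le_rfl, hh.le⟩
  have step2 : ∀ t ∈ Iio T, 0 ≤ pzz 0 t := by
    intro t ht
    apply second_deriv_nonneg_left (fun z hz => hpz z hz t ht)
      (hpzz 0 h0m t ht) (hbc0 t ht) hh (Icc_subset_Icc le_rfl le_rfl)
    exact fun z hz => key t ht.le 0 z le_rfl hz.1 hz.2
  -- Step 3: conclude antitonicity
  apply antitoneOn_of_deriv_nonpos (convex_Iic T)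
  · exact hcont.comp (Continuous.continuousOn (by fun_prop :
      Continuous fun t : ℝ => ((0:ℝ), t))) (fun t ht => ⟨h0m, ht⟩)
  · intro t ht
    rw [interior_Iic] at ht
    exact ((hpt 0 h0m t ht).hasDerivAt (Iio_mem_nhds ht)).differentiableAt.differentiableWithinAt
  · intro t ht
    rw [interior_Iic] at ht
    have hd := (hpt 0 h0m t ht).hasDerivAt (Iio_mem_nhds ht)
    rw [hd.deriv]
    have hpde0 := hpde 0 h0m t ht
    rw [hbc0 t ht] at hpde0
    have hk0 := hkpos 0 h0m
    have := step2 t ht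
    nlinarith

/-- Monotonicity of the surface value of a solution of the backward adjoint
equation `p_t + (k p_z)_z + w p_z = 0` with Neumann boundary conditions and
monotone terminal data `ρ`: if `ρ` is increasing in `z` then `t ↦ p(0,t)` is
nonincreasing, and if `ρ` is decreasing then `t ↦ p(0,t)` is nondecreasing. -/
theorem surface_value_monotone
    (h T : ℝ) (hh : 0 < h) (k w : ℝ → ℝ)
    (hk : ContDiffOn ℝ 2 k (Icc 0 h)) (hw : ContDiffOn ℝ 2 w (Icc 0 h))
    (hkpos : ∀ z ∈ Icc (0:ℝ) h, 0 < k z)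
    (hw0 : w 0 = 0) (hwh : w h = 0)
    (ρ : ℝ → ℝ) (hρ : ContDiffOn ℝ 1 ρ (Icc 0 h))
    (p pz pzz pt : ℝ → ℝ → ℝ)
    (hcont : ContinuousOn (fun x : ℝ × ℝ => p x.1 x.2) (Icc 0 h ×ˢ Iic T))
    (hsmooth : ContDiffOn ℝ (⊤ : ℕ∞) (fun x : ℝ × ℝ => p x.1 x.2) (Icc 0 h ×ˢ Iio T))
    (hpz : ∀ z ∈ Icc (0:ℝ) h, ∀ t ∈ Iio T,
      HasDerivWithinAt (fun z' => p z' t) (pz z t) (Icc 0 h) z)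
    (hpzz : ∀ z ∈ Icc (0:ℝ) h, ∀ t ∈ Iio T,
      HasDerivWithinAt (fun z' => pz z' t) (pzz z t) (Icc 0 h) z)
    (hpt : ∀ z ∈ Icc (0:ℝ) h, ∀ t ∈ Iio T,
      HasDerivWithinAt (fun t' => p z t') (pt z t) (Iio T) t)
    (hpde : ∀ z ∈ Icc (0:ℝ) h, ∀ t ∈ Iio T,
      pt z t + (derivWithin k (Icc 0 h) z * pz z t + k z * pzz z t)
        + w z * pz z t = 0)
    (hbc0 : ∀ t ∈ Iio T, pz 0 t = 0) (hbch : ∀ t ∈ Iio T, pz h t = 0)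
    (hterm : ∀ z ∈ Icc (0:ℝ) h, p z T = ρ z) :
    (MonotoneOn ρ (Icc 0 h) → AntitoneOn (fun t => p 0 t) (Iic T)) ∧
    (AntitoneOn ρ (Icc 0 h) → MonotoneOn (fun t => p 0 t) (Iic T)) := by
  constructor
  · intro hm
    exact surface_core h T hh k w hkpos ρ p pz pzz pt hcont hpz hpzz hpt hpde
      hbc0 hbch hterm hm
  · intro hm
    have hmono : MonotoneOn (fun z => - ρ z) (Icc 0 h) :=
      fun x hx y hy hxy => neg_le_neg (hm hx hy hxy)
    have hanti : AntitoneOn (fun t => - p 0 t) (Iic T) := by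
      apply surface_core h T hh k w hkpos (fun z => - ρ z)
        (fun z t => - p z t) (fun z t => - pz z t) (fun z t => - pzz z t)
        (fun z t => - pt z t) hcont.neg
      · exact fun z hz t ht => (hpz z hz t ht).neg
      · exact fun z hz t ht => (hpzz z hz t ht).neg
      · exact fun z hz t ht => (hpt z hz t ht).neg
      · intro z hz t ht
        have := hpde z hz t ht
        ring_nf
        ring_nf at this
        linarith
      · intro t ht; rw [hbc0 t ht, neg_zero]
      · intro t ht; rw [hbch t ht, neg_zero]
      · intro z hz; rw [hterm z hz]
      · exact hmono
    intro x hx y hy hxy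
    have := hanti hx hy hxy
    simpa using this
end
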